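/- arXiv:2101.08971 — 3 statements merged into one kernel-verified Lean document; each statement's English description precedes it below -/
import Mathlib

section
/- Let (ℱ_n) be an increasing sequence of finite interval partitions of a bounded half-open interval I and let 𝒞 be a collection of atoms, with one atom A_{n_x}(x) ∋ x chosen for each x in a set G ⊆ I, such that the collection is nested and covers G. Then there exists a countable subcollection of pairwise disjoint atoms from 𝒞 that still covers G, namely the maximal atoms of the collection. -/
/-- If `C` is a nested collection of atoms (half-open intervals of positive
length) covering a set `G`, such that above every member of `C` there is a maximal member,
then there is a countable pairwise disjoint subcollection of `C` still covering `G`. -/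
theorem exists_countable_disjoint_subcover_of_nested
    (C : Set (Set ℝ)) (G : Set ℝ)
    (hIoc : ∀ A ∈ C, ∃ a b : ℝ, a < b ∧ A = Set.Ioc a b)
    (hnested : ∀ A ∈ C, ∀ B ∈ C, A ⊆ B ∨ B ⊆ A ∨ Disjoint A B)
    (hcover : G ⊆ ⋃₀ C)
    (hmax : ∀ A ∈ C, ∃ B ∈ C, A ⊆ B ∧ ∀ B' ∈ C, B ⊆ B' → B = B') :
    ∃ D ⊆ C, D.Countable ∧ D.PairwiseDisjoint id ∧ G ⊆ ⋃₀ D := by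
  set D : Set (Set ℝ) := {A | A ∈ C ∧ ∀ B ∈ C, A ⊆ B → A = B} with hD
  have hDC : D ⊆ C := fun A hA => hA.1
  -- pairwise disjoint
  have hdisj : D.PairwiseDisjoint id := by
    intro A hA B hB hne
    rcases hnested A (hDC hA) B (hDC hB) with h | h | h
    · exact absurd (hA.2 B (hDC hB) h) hne
    · exact absurd (hB.2 A (hDC hA) h).symm hne
    · exact h
  -- pick a rational in each member of D
  have hq : ∀ A : D, ∃ q : ℚ, (q : ℝ) ∈ (A : Set ℝ) := by
    rintro ⟨A, hA⟩
    obtain ⟨a, b, hab, rfl⟩ := hIoc A (hDC hA)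
    obtain ⟨q, hq1, hq2⟩ := exists_rat_btwn hab
    exact ⟨q, hq1, hq2.le⟩
  choose f hf using hq
  have hfinj : Function.Injective f := by
    intro A B hAB
    ext1
    by_contra hne
    have := hdisj A.2 B.2 (by simpa using hne)
    exact Set.disjoint_left.mp this (hf A) (hAB ▸ hf B)
  have hcount : D.Countable := by
    rw [Set.countable_coe_iff.symm]
    exact hfinj.countable
  refine ⟨D, hDC, hcount, hdisj, fun x hx => ?_⟩
  obtain ⟨A, hAC, hxA⟩ := hcover hx
  obtain ⟨B, hBC, hAB, hBmax⟩ := hmax A hAC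
  exact ⟨B, ⟨hBC, hBmax⟩, hAB hxA⟩
end

section
/- Let (ℱ_n) be an interval filtration on I^d, q ∈ [0,1), and θ a non-negative finitely additive measure on 𝒜 = ⋃_n ℱ_n. Define b_n(q,θ,A,x) = q^{d_n(A, A_n(x))} θ(A) / |conv(A ∪ A_n(x))| for atoms A of ℱ_n, and M_K θ(x) = sup_{n ≥ K} ∑_{A atom of ℱ_n} b_n(q,θ,A,x). Then for every Borel set B ⊆ I^d, every K ≥ 1 and t > 0: |B ∩ {M_K θ > t}| ≤ (C/t) ∑_{s=0}^∞ q^{s/2}(s+1)^{d-1} θ(A_{K,s}(B)), where C depends only on q and d, and A_{K,s}(B) is the union of all atoms of ℱ_K within ℓ¹-index-distance s of atoms meeting B. -/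
open MeasureTheory
open scoped ENNReal

/-- ℓ¹-distance between atom indices in `ℤ^d`. -/
def dist1 {d : ℕ} (i j : Fin d → ℤ) : ℕ := ∑ ℓ, (i ℓ - j ℓ).natAbs

/-- Smallest axis-parallel rectangle containing `S ⊆ ℝ^d`. -/
def rectHull {d : ℕ} (S : Set (Fin d → ℝ)) : Set (Fin d → ℝ) :=
  {x | ∀ ℓ, sInf ((fun z => z ℓ) '' S) ≤ x ℓ ∧ x ℓ ≤ sSup ((fun z => z ℓ) '' S)}

/-- The quantity `b_n(q,θ,A,x) = q^{d_n(A,A_n(x))} θ(A) / |conv(A ∪ A_n(x))|` for the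
atom `A = atom n i` of the `n`-th partition, where `An n x` is the index of the atom
containing `x`. -/
noncomputable def bTerm {d : ℕ} (q : ℝ) (θ : Set (Fin d → ℝ) → ℝ≥0∞)
    (atom : ℕ → (Fin d → ℤ) → Set (Fin d → ℝ)) (An : ℕ → (Fin d → ℝ) → Fin d → ℤ)
    (n : ℕ) (i : Fin d → ℤ) (x : Fin d → ℝ) : ℝ≥0∞ :=
  ENNReal.ofReal q ^ dist1 i (An n x) * θ (atom n i) /
    volume (rectHull (atom n i ∪ atom n (An n x)))

/-- The maximal function `M_K θ (x) = sup_{n ≥ K} ∑_{A atom of ℱ_n} b_n(q,θ,A,x)`. -/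
noncomputable def maxFn {d : ℕ} (q : ℝ) (θ : Set (Fin d → ℝ) → ℝ≥0∞)
    (Λ : ℕ → Finset (Fin d → ℤ)) (atom : ℕ → (Fin d → ℤ) → Set (Fin d → ℝ))
    (An : ℕ → (Fin d → ℝ) → Fin d → ℤ) (K : ℕ) (x : Fin d → ℝ) : ℝ≥0∞ :=
  ⨆ n, ⨆ (_ : K ≤ n), ∑ i ∈ Λ n, bTerm q θ atom An n i x

/-- `A_{K,s}(B)`: the union of all atoms of `ℱ_K` within ℓ¹-index-distance `s` of an
atom of `ℱ_K` meeting `B`. -/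
def nbhdUnion {d : ℕ} (Λ : ℕ → Finset (Fin d → ℤ))
    (atom : ℕ → (Fin d → ℤ) → Set (Fin d → ℝ)) (K s : ℕ) (B : Set (Fin d → ℝ)) :
    Set (Fin d → ℝ) :=
  ⋃ (i : Fin d → ℤ) (_ : i ∈ Λ K ∧ ∃ j ∈ Λ K, dist1 i j ≤ s ∧ (atom K j ∩ B).Nonempty),
    atom K i

/-- Bundled interval filtration data. -/
structure IF (d : ℕ) where
  a : ℝ
  b : ℝ
  hab : a < b
  Λ : ℕ → Finset (Fin d → ℤ)
  atom : ℕ → (Fin d → ℤ) → Set (Fin d → ℝ)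
  hbox : ∀ n, ∃ lo hi : Fin d → ℤ, Λ n = Fintype.piFinset fun ℓ => Finset.Icc (lo ℓ) (hi ℓ)
  LO : ℕ → (Fin d → ℤ) → Fin d → ℝ
  HI : ℕ → (Fin d → ℤ) → Fin d → ℝ
  hLH : ∀ n i, i ∈ Λ n → (∀ ℓ, LO n i ℓ < HI n i ℓ) ∧
      atom n i = {x | ∀ ℓ, LO n i ℓ < x ℓ ∧ x ℓ ≤ HI n i ℓ}
  hdisj : ∀ n, ((Λ n : Set (Fin d → ℤ))).PairwiseDisjoint (atom n)
  hcover : ∀ n, (⋃ i ∈ Λ n, atom n i) = Set.univ.pi fun _ : Fin d => Set.Ioc a b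
  hfil : ∀ n, ∀ i ∈ Λ (n + 1), ∃ j ∈ Λ n, atom (n + 1) i ⊆ atom n j
  hmono : ∀ n, ∀ i ∈ Λ n, ∀ j ∈ Λ n, ∀ ℓ : Fin d, i ℓ < j ℓ →
      ∀ x ∈ atom n i, ∀ y ∈ atom n j, x ℓ ≤ y ℓ

namespace IF

variable {d : ℕ} (F : IF d)

def cube : Set (Fin d → ℝ) := Set.univ.pi fun _ : Fin d => Set.Ioc F.a F.b

lemma mem_atom {n : ℕ} {i : Fin d → ℤ} (h : i ∈ F.Λ n) {x : Fin d → ℝ} :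
    x ∈ F.atom n i ↔ ∀ ℓ, F.LO n i ℓ < x ℓ ∧ x ℓ ≤ F.HI n i ℓ := by
  rw [(F.hLH n i h).2]; rfl

lemma lo_lt_hi {n : ℕ} {i : Fin d → ℤ} (h : i ∈ F.Λ n) (ℓ : Fin d) :
    F.LO n i ℓ < F.HI n i ℓ := (F.hLH n i h).1 ℓ

lemma hipt_mem {n : ℕ} {i : Fin d → ℤ} (h : i ∈ F.Λ n) : F.HI n i ∈ F.atom n i :=
  (F.mem_atom h).2 fun ℓ => ⟨F.lo_lt_hi h ℓ, le_rfl⟩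

lemma atom_nonempty {n : ℕ} {i : Fin d → ℤ} (h : i ∈ F.Λ n) : (F.atom n i).Nonempty :=
  ⟨_, F.hipt_mem h⟩

lemma atom_subset_cube {n : ℕ} {i : Fin d → ℤ} (h : i ∈ F.Λ n) : F.atom n i ⊆ F.cube := by
  intro x hx
  have : x ∈ ⋃ i ∈ F.Λ n, F.atom n i := Set.mem_biUnion h hx
  rwa [F.hcover n] at this

lemma mem_cube_iff {x : Fin d → ℝ} : x ∈ F.cube ↔ ∀ ℓ, F.a < x ℓ ∧ x ℓ ≤ F.b := by
  simp [cube, Set.mem_pi]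

lemma hi_le_b {n : ℕ} {i : Fin d → ℤ} (h : i ∈ F.Λ n) (ℓ : Fin d) : F.HI n i ℓ ≤ F.b :=
  ((F.mem_cube_iff).1 (F.atom_subset_cube h (F.hipt_mem h)) ℓ).2

lemma a_lt_hi {n : ℕ} {i : Fin d → ℤ} (h : i ∈ F.Λ n) (ℓ : Fin d) : F.a < F.HI n i ℓ :=
  ((F.mem_cube_iff).1 (F.atom_subset_cube h (F.hipt_mem h)) ℓ).1

lemma a_le_lo {n : ℕ} {i : Fin d → ℤ} (h : i ∈ F.Λ n) (ℓ : Fin d) : F.a ≤ F.LO n i ℓ := by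
  by_contra hc
  push_neg at hc
  set c := min F.a (F.HI n i ℓ) with hc'
  have h1 : F.LO n i ℓ < c := lt_min hc (F.lo_lt_hi h ℓ)
  have h2 : c ≤ F.HI n i ℓ := min_le_right _ _
  have hz : Function.update (F.HI n i) ℓ c ∈ F.atom n i := by
    rw [F.mem_atom h]
    intro ℓ'
    by_cases hℓ : ℓ' = ℓ
    · subst hℓ; simp [h1, h2]
    · simp [Function.update_of_ne hℓ, F.lo_lt_hi h ℓ']
  have := ((F.mem_cube_iff).1 (F.atom_subset_cube h hz) ℓ).1
  simp only [Function.update_self] at this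
  exact absurd (lt_min_iff.1 this).1 (lt_irrefl _)

lemma exists_atom {n : ℕ} {x : Fin d → ℝ} (hx : x ∈ F.cube) :
    ∃ i ∈ F.Λ n, x ∈ F.atom n i := by
  have : x ∈ ⋃ i ∈ F.Λ n, F.atom n i := by rw [F.hcover n]; exact hx
  simpa using this

lemma proj_atom {n : ℕ} {i : Fin d → ℤ} (h : i ∈ F.Λ n) (ℓ : Fin d) :
    (fun z => z ℓ) '' F.atom n i = Set.Ioc (F.LO n i ℓ) (F.HI n i ℓ) := by
  ext v
  constructor
  · rintro ⟨x, hx, rfl⟩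
    exact ((F.mem_atom h).1 hx ℓ)
  · intro hv
    refine ⟨Function.update (F.HI n i) ℓ v, ?_, by simp⟩
    rw [F.mem_atom h]
    intro ℓ'
    by_cases hℓ : ℓ' = ℓ
    · subst hℓ; simpa using hv
    · simp [Function.update_of_ne hℓ, F.lo_lt_hi h ℓ']

/-- Two points of an atom differing in coordinate ℓ. -/
lemma exists_two_points {n : ℕ} {i : Fin d → ℤ} (h : i ∈ F.Λ n) (ℓ : Fin d) :
    ∃ x ∈ F.atom n i, ∃ y ∈ F.atom n i, x ℓ < y ℓ := by
  have h1 := F.lo_lt_hi h ℓ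
  set v := (F.LO n i ℓ + F.HI n i ℓ) / 2 with hv
  have hv1 : F.LO n i ℓ < v := by rw [hv]; linarith
  have hv2 : v < F.HI n i ℓ := by rw [hv]; linarith
  refine ⟨Function.update (F.HI n i) ℓ v, ?_, F.HI n i, F.hipt_mem h, by simp [hv2]⟩
  rw [F.mem_atom h]
  intro ℓ'
  by_cases hℓ : ℓ' = ℓ
  · subst hℓ; simp [hv1, le_of_lt hv2]
  · simp [Function.update_of_ne hℓ, F.lo_lt_hi h ℓ']

/-- G(i): ordered indices give ordered, non-overlapping intervals. -/
lemma hi_le_lo {n : ℕ} {i i' : Fin d → ℤ} (h : i ∈ F.Λ n) (h' : i' ∈ F.Λ n)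
    {ℓ : Fin d} (hlt : i ℓ < i' ℓ) : F.HI n i ℓ ≤ F.LO n i' ℓ := by
  by_contra hc
  push_neg at hc
  set c := min (F.HI n i' ℓ) ((F.LO n i' ℓ + F.HI n i ℓ) / 2) with hcdef
  have hc1 : F.LO n i' ℓ < c := by
    apply lt_min (F.lo_lt_hi h' ℓ); linarith
  have hc2 : c ≤ F.HI n i' ℓ := min_le_left _ _
  have hy : Function.update (F.HI n i') ℓ c ∈ F.atom n i' := by
    rw [F.mem_atom h']
    intro ℓ'
    by_cases hℓ : ℓ' = ℓ
    · subst hℓ; simp [hc1, hc2]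
    · simp [Function.update_of_ne hℓ, F.lo_lt_hi h' ℓ']
  have := F.hmono n i h i' h' ℓ hlt (F.HI n i) (F.hipt_mem h) _ hy
  simp at this
  have hclt : c < F.HI n i ℓ := by
    apply min_lt_of_right_lt; linarith
  linarith


/-- If `w` agrees with `HI n i'` off coordinate ℓ, lies in atom `i''` with the same
ℓ-index as `i'`, and `i'' ≠ i'`, we get a contradiction. -/
lemma off_coord_contra {n : ℕ} {i' i'' : Fin d → ℤ} (h' : i' ∈ F.Λ n) (h'' : i'' ∈ F.Λ n)
    {ℓ : Fin d} {w : Fin d → ℝ} (hw : w ∈ F.atom n i'')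
    (hagree : ∀ ℓ0, ℓ0 ≠ ℓ → w ℓ0 = F.HI n i' ℓ0) (heq : i'' ℓ = i' ℓ) (hne : i'' ≠ i') :
    False := by
  have : ∃ ℓ0, i'' ℓ0 ≠ i' ℓ0 := by
    by_contra hcon; push_neg at hcon; exact hne (funext hcon)
  obtain ⟨ℓ0, hℓ0⟩ := this
  have hℓ0ℓ : ℓ0 ≠ ℓ := by rintro rfl; exact hℓ0 heq
  have hwℓ0 := (F.mem_atom h'').1 hw ℓ0
  rcases lt_or_gt_of_ne hℓ0 with hlt | hlt
  · -- i'' ℓ0 < i' ℓ0 : HI i'' ℓ0 ≤ LO i' ℓ0 < HI i' ℓ0 = w ℓ0 ≤ HI i'' ℓ0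
    have h1 := F.hi_le_lo h'' h' hlt
    have h2 := F.lo_lt_hi h' ℓ0
    have h3 := hagree ℓ0 hℓ0ℓ
    linarith [hwℓ0.2]
  · -- i' ℓ0 < i'' ℓ0 : w ℓ0 = HI i' ℓ0 ≤ LO i'' ℓ0 < w ℓ0
    have h1 := F.hi_le_lo h' h'' hlt
    have h3 := hagree ℓ0 hℓ0ℓ
    linarith [hwℓ0.1, F.lo_lt_hi h' ℓ0]

/-- G(ii), HI half: equal ℓ-indices give equal HI in coordinate ℓ. -/
lemma hi_eq_of_eq {n : ℕ} {i i' : Fin d → ℤ} (h : i ∈ F.Λ n) (h' : i' ∈ F.Λ n)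
    {ℓ : Fin d} (heq : i ℓ = i' ℓ) : F.HI n i ℓ = F.HI n i' ℓ := by
  -- By symmetry it suffices to derive a contradiction from HI i' ℓ < HI i ℓ.
  have key : ∀ (j j' : Fin d → ℤ), j ∈ F.Λ n → j' ∈ F.Λ n → j ℓ = j' ℓ →
      ¬ (F.HI n j' ℓ < F.HI n j ℓ) := by
    intro j j' hj hj' hjeq hlt
    set z := Function.update (F.HI n j') ℓ (F.HI n j ℓ) with hzdef
    have hzcube : z ∈ F.cube := by
      rw [F.mem_cube_iff]
      intro ℓ'
      by_cases hℓ : ℓ' = ℓ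
      · subst hℓ
        simp only [hzdef, Function.update_self]
        exact ⟨F.a_lt_hi hj ℓ', F.hi_le_b hj ℓ'⟩
      · simp only [hzdef, Function.update_of_ne hℓ]
        exact ⟨F.a_lt_hi hj' ℓ', F.hi_le_b hj' ℓ'⟩
    obtain ⟨i'', h'', hz⟩ := F.exists_atom (n := n) hzcube
    have hzℓ : z ℓ = F.HI n j ℓ := by simp [hzdef]
    have hzmem := (F.mem_atom h'').1 hz ℓ
    rcases lt_trichotomy (i'' ℓ) (j ℓ) with hc | hc | hc
    · have := F.hi_le_lo h'' hj hc
      have := F.lo_lt_hi hj ℓ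
      linarith [hzmem.2]
    · -- same ℓ-index
      by_cases hii : i'' = j'
      · subst hii
        rw [hzℓ] at hzmem
        linarith [hzmem.2]
      · exact F.off_coord_contra hj' h'' hz
          (fun ℓ0 hℓ0 => by simp [hzdef, Function.update_of_ne hℓ0]) (hc.trans hjeq) hii
    · have := F.hi_le_lo hj h'' hc
      rw [hzℓ] at hzmem
      linarith [hzmem.1]
  rcases lt_trichotomy (F.HI n i ℓ) (F.HI n i' ℓ) with hc | hc | hc
  · exact absurd hc (key i' i h' h heq.symm)
  · exact hc
  · exact absurd hc (key i i' h h' heq)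

/-- G(ii), LO half. -/
lemma lo_eq_of_eq {n : ℕ} {i i' : Fin d → ℤ} (h : i ∈ F.Λ n) (h' : i' ∈ F.Λ n)
    {ℓ : Fin d} (heq : i ℓ = i' ℓ) : F.LO n i ℓ = F.LO n i' ℓ := by
  have key : ∀ (j j' : Fin d → ℤ), j ∈ F.Λ n → j' ∈ F.Λ n → j ℓ = j' ℓ →
      ¬ (F.LO n j ℓ < F.LO n j' ℓ) := by
    intro j j' hj hj' hjeq hlt
    set c := min (F.LO n j' ℓ) (F.HI n j ℓ) with hcdef
    have hc1 : F.LO n j ℓ < c := lt_min hlt (F.lo_lt_hi hj ℓ)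
    have hc2 : c ≤ F.HI n j ℓ := min_le_right _ _
    have hc3 : c ≤ F.LO n j' ℓ := min_le_left _ _
    set z := Function.update (F.HI n j') ℓ c with hzdef
    have hzcube : z ∈ F.cube := by
      rw [F.mem_cube_iff]
      intro ℓ'
      by_cases hℓ : ℓ' = ℓ
      · subst hℓ
        simp only [hzdef, Function.update_self]
        constructor
        · exact lt_of_le_of_lt (F.a_le_lo hj ℓ') hc1
        · exact le_trans hc2 (F.hi_le_b hj ℓ')
      · simp only [hzdef, Function.update_of_ne hℓ]
        exact ⟨F.a_lt_hi hj' ℓ', F.hi_le_b hj' ℓ'⟩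
    obtain ⟨i'', h'', hz⟩ := F.exists_atom (n := n) hzcube
    have hzℓ : z ℓ = c := by simp [hzdef]
    have hzmem := (F.mem_atom h'').1 hz ℓ
    rcases lt_trichotomy (i'' ℓ) (j ℓ) with hc | hc | hc
    · have := F.hi_le_lo h'' hj hc
      rw [hzℓ] at hzmem
      linarith [hzmem.2]
    · by_cases hii : i'' = j'
      · subst hii
        rw [hzℓ] at hzmem
        linarith [hzmem.1]
      · exact F.off_coord_contra hj' h'' hz
          (fun ℓ0 hℓ0 => by simp [hzdef, Function.update_of_ne hℓ0]) (hc.trans hjeq) hii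
    · have := F.hi_le_lo hj h'' hc
      rw [hzℓ] at hzmem
      linarith [hzmem.1]
  rcases lt_trichotomy (F.LO n i ℓ) (F.LO n i' ℓ) with hc | hc | hc
  · exact absurd hc (key i i' h h' heq)
  · exact hc
  · exact absurd hc (key i' i h' h heq.symm)

lemma lo_mono {n : ℕ} {i i' : Fin d → ℤ} (h : i ∈ F.Λ n) (h' : i' ∈ F.Λ n)
    {ℓ : Fin d} (hle : i ℓ ≤ i' ℓ) : F.LO n i ℓ ≤ F.LO n i' ℓ := by
  rcases lt_or_eq_of_le hle with hlt | heq
  · exact le_trans (le_of_lt (F.lo_lt_hi h ℓ)) (F.hi_le_lo h h' hlt)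
  · exact le_of_eq (F.lo_eq_of_eq h h' heq)

lemma hi_mono {n : ℕ} {i i' : Fin d → ℤ} (h : i ∈ F.Λ n) (h' : i' ∈ F.Λ n)
    {ℓ : Fin d} (hle : i ℓ ≤ i' ℓ) : F.HI n i ℓ ≤ F.HI n i' ℓ := by
  rcases lt_or_eq_of_le hle with hlt | heq
  · exact le_trans (F.hi_le_lo h h' hlt) (le_of_lt (F.lo_lt_hi h' ℓ))
  · exact le_of_eq (F.hi_eq_of_eq h h' heq)

/-- Adjacent atoms have touching intervals. -/
lemma adj_touch {n : ℕ} {i i' : Fin d → ℤ} (h : i ∈ F.Λ n) (h' : i' ∈ F.Λ n)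
    {ℓ : Fin d} (hsucc : i' ℓ = i ℓ + 1) : F.HI n i ℓ = F.LO n i' ℓ := by
  refine le_antisymm (F.hi_le_lo h h' (by omega)) ?_
  by_contra hc
  push_neg at hc
  set c := min (F.LO n i' ℓ) ((F.HI n i ℓ + F.LO n i' ℓ) / 2) with hcdef
  have hc1 : F.HI n i ℓ < c := by apply lt_min hc; linarith
  have hc2 : c ≤ F.LO n i' ℓ := min_le_left _ _
  set z := Function.update (F.HI n i) ℓ c with hzdef
  have hzcube : z ∈ F.cube := by
    rw [F.mem_cube_iff]
    intro ℓ'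
    by_cases hℓ : ℓ' = ℓ
    · subst hℓ
      simp only [hzdef, Function.update_self]
      constructor
      · exact lt_trans (F.a_lt_hi h ℓ') hc1
      · exact le_trans (hc2.trans (le_of_lt (F.lo_lt_hi h' ℓ'))) (F.hi_le_b h' ℓ')
    · simp only [hzdef, Function.update_of_ne hℓ]
      exact ⟨F.a_lt_hi h ℓ', F.hi_le_b h ℓ'⟩
  obtain ⟨i'', h'', hz⟩ := F.exists_atom (n := n) hzcube
  have hzℓ : z ℓ = c := by simp [hzdef]
  have hzmem := (F.mem_atom h'').1 hz ℓ
  rcases lt_trichotomy (i'' ℓ) (i ℓ) with hcc | hcc | hcc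
  · have := F.hi_le_lo h'' h hcc
    have := F.lo_lt_hi h ℓ
    rw [hzℓ] at hzmem
    linarith [hzmem.2]
  · by_cases hii : i'' = i
    · subst hii
      rw [hzℓ] at hzmem
      linarith [hzmem.2]
    · exact F.off_coord_contra h h'' hz
        (fun ℓ0 hℓ0 => by simp [hzdef, Function.update_of_ne hℓ0]) hcc hii
  · -- i ℓ < i'' ℓ, so i' ℓ ≤ i'' ℓ, LO i'' ℓ ≥ LO i' ℓ ≥ c
    have hle : i' ℓ ≤ i'' ℓ := by omega
    have := F.lo_mono h' h'' hle
    rw [hzℓ] at hzmem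
    linarith [hzmem.1]


lemma mem_box_update {n : ℕ} {j i i' : Fin d → ℤ} (hj : j ∈ F.Λ n) (h : i ∈ F.Λ n)
    (h' : i' ∈ F.Λ n) {ℓ : Fin d} {v : ℤ} (h1 : i ℓ ≤ v) (h2 : v ≤ i' ℓ) :
    Function.update j ℓ v ∈ F.Λ n := by
  obtain ⟨lo, hi, hb⟩ := F.hbox n
  rw [hb] at hj h h' ⊢
  rw [Fintype.mem_piFinset] at hj h h' ⊢
  intro ℓ'
  by_cases hℓ : ℓ' = ℓ
  · subst hℓ
    simp only [Function.update_self, Finset.mem_Icc]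
    exact ⟨le_trans (Finset.mem_Icc.1 (h ℓ')).1 h1, le_trans h2 (Finset.mem_Icc.1 (h' ℓ')).2⟩
  · simp only [Function.update_of_ne hℓ]
    exact hj ℓ'

noncomputable def par (n : ℕ) (i : Fin d → ℤ) : Fin d → ℤ :=
  if h : i ∈ F.Λ (n + 1) then (F.hfil n i h).choose else i

lemma par_mem {n : ℕ} {i : Fin d → ℤ} (h : i ∈ F.Λ (n + 1)) : F.par n i ∈ F.Λ n := by
  rw [par, dif_pos h]
  exact (F.hfil n i h).choose_spec.1

lemma par_sub {n : ℕ} {i : Fin d → ℤ} (h : i ∈ F.Λ (n + 1)) :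
    F.atom (n + 1) i ⊆ F.atom n (F.par n i) := by
  rw [par, dif_pos h]
  exact (F.hfil n i h).choose_spec.2

/-- The parent interval contains the child interval, coordinatewise. -/
lemma par_interval {n : ℕ} {i : Fin d → ℤ} (h : i ∈ F.Λ (n + 1)) (ℓ : Fin d) :
    F.LO n (F.par n i) ℓ ≤ F.LO (n + 1) i ℓ ∧
      F.HI (n + 1) i ℓ ≤ F.HI n (F.par n i) ℓ := by
  have hsub : Set.Ioc (F.LO (n+1) i ℓ) (F.HI (n+1) i ℓ) ⊆
      Set.Ioc (F.LO n (F.par n i) ℓ) (F.HI n (F.par n i) ℓ) := by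
    rw [← F.proj_atom h ℓ, ← F.proj_atom (F.par_mem h) ℓ]
    exact Set.image_mono (F.par_sub h)
  rw [Set.Ioc_subset_Ioc_iff (F.lo_lt_hi h ℓ)] at hsub
  exact ⟨hsub.2, hsub.1⟩

/-- One-step monotonicity of parent indices. -/
lemma par_mono {n : ℕ} {i i' : Fin d → ℤ} (h : i ∈ F.Λ (n+1)) (h' : i' ∈ F.Λ (n+1))
    {ℓ : Fin d} (hle : i ℓ ≤ i' ℓ) : F.par n i ℓ ≤ F.par n i' ℓ := by
  rcases lt_or_eq_of_le hle with hlt | heq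
  · by_contra hc
    push_neg at hc
    -- par i' ℓ < par i ℓ : points of atom i ≤ points of atom i' (level n+1),
    -- but points of parent of i' ≤ points of parent of i (level n).
    obtain ⟨x1, hx1, x2, hx2, hx12⟩ := F.exists_two_points h ℓ
    have hy := F.hipt_mem h'
    have h1 := F.hmono (n+1) i h i' h' ℓ hlt x2 hx2 _ hy
    have h2 := F.hmono n (F.par n i') (F.par_mem h') (F.par n i) (F.par_mem h) ℓ hc
        _ (F.par_sub h' hy) x1 (F.par_sub h hx1)
    have h3 := F.hmono (n+1) i h i' h' ℓ hlt x1 hx1 _ hy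
    linarith
  · -- equal child indices: parent intervals overlap at HI (n+1) i ℓ
    have hv1 : F.LO n (F.par n i) ℓ < F.HI (n+1) i ℓ ∧
        F.HI (n+1) i ℓ ≤ F.HI n (F.par n i) ℓ :=
      ⟨lt_of_le_of_lt (F.par_interval h ℓ).1 (F.lo_lt_hi h ℓ), (F.par_interval h ℓ).2⟩
    have hv2 : F.LO n (F.par n i') ℓ < F.HI (n+1) i ℓ ∧
        F.HI (n+1) i ℓ ≤ F.HI n (F.par n i') ℓ := by
      have he1 : F.HI (n+1) i ℓ = F.HI (n+1) i' ℓ := F.hi_eq_of_eq h h' heq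
      rw [he1]
      exact ⟨lt_of_le_of_lt (F.par_interval h' ℓ).1 (F.lo_lt_hi h' ℓ), (F.par_interval h' ℓ).2⟩
    by_contra hc
    push_neg at hc
    have := F.hi_le_lo (F.par_mem h') (F.par_mem h) hc
    linarith [hv1.1, hv2.2]

/-- One-step Lipschitz bound for consecutive indices. -/
lemma par_consec {n : ℕ} {i i' : Fin d → ℤ} (h : i ∈ F.Λ (n+1)) (h' : i' ∈ F.Λ (n+1))
    {ℓ : Fin d} (hsucc : i' ℓ = i ℓ + 1) : F.par n i' ℓ ≤ F.par n i ℓ + 1 := by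
  by_contra hc
  push_neg at hc
  have hc' : F.par n i ℓ + 1 + 1 ≤ F.par n i' ℓ := by omega
  set c := F.HI (n+1) i ℓ with hcdef
  have hc1 : F.LO n (F.par n i) ℓ < c := lt_of_le_of_lt (F.par_interval h ℓ).1 (F.lo_lt_hi h ℓ)
  have hc2 : c ≤ F.HI n (F.par n i) ℓ := (F.par_interval h ℓ).2
  have hc3 : F.LO n (F.par n i') ℓ ≤ c := by
    have := (F.par_interval h' ℓ).1
    rw [← F.adj_touch h h' hsucc] at this
    exact this
  set istar := Function.update (F.par n i) ℓ (F.par n i ℓ + 1) with histar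
  have histarmem : istar ∈ F.Λ n := by
    exact F.mem_box_update (F.par_mem h) (F.par_mem h) (F.par_mem h') (by omega) (by omega)
  have k1 : F.HI n (F.par n i) ℓ ≤ F.LO n istar ℓ := by
    apply F.hi_le_lo (F.par_mem h) histarmem
    simp [histar]
  have k2 : F.HI n istar ℓ ≤ F.LO n (F.par n i') ℓ := by
    apply F.hi_le_lo histarmem (F.par_mem h')
    simp [histar]
    omega
  linarith [F.lo_lt_hi histarmem ℓ]

/-- One-step Lipschitz property. -/
lemma par_lip {n : ℕ} {i i' : Fin d → ℤ} (h : i ∈ F.Λ (n+1)) (h' : i' ∈ F.Λ (n+1))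
    {ℓ : Fin d} (hle : i ℓ ≤ i' ℓ) :
    F.par n i' ℓ - F.par n i ℓ ≤ i' ℓ - i ℓ := by
  have aux : ∀ k : ℕ, i ℓ + k ≤ i' ℓ →
      F.par n (Function.update i' ℓ (i ℓ + k)) ℓ ≤ F.par n i ℓ + k := by
    intro k
    induction k with
    | zero =>
      intro hk
      have hmem : Function.update i' ℓ (i ℓ + (0:ℕ)) ∈ F.Λ (n+1) :=
        F.mem_box_update h' h h' (by omega) (by omega)
      have : F.par n (Function.update i' ℓ (i ℓ + (0:ℕ))) ℓ ≤ F.par n i ℓ := by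
        apply le_of_eq
        have h1 := F.par_mono hmem h (ℓ := ℓ) (by simp)
        have h2 := F.par_mono h hmem (ℓ := ℓ) (by simp)
        omega
      simpa using this
    | succ k ih =>
      intro hk
      have hmemk : Function.update i' ℓ (i ℓ + (k:ℕ)) ∈ F.Λ (n+1) :=
        F.mem_box_update h' h h' (by omega) (by omega)
      have hmemk1 : Function.update i' ℓ (i ℓ + ((k:ℕ)+1:ℕ)) ∈ F.Λ (n+1) :=
        F.mem_box_update h' h h' (by omega) (by omega)
      have hstep := F.par_consec hmemk hmemk1 (ℓ := ℓ) (by simp; omega)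
      have := ih (by omega)
      push_cast
      push_cast at hstep this
      omega
  have hnn : (0:ℤ) ≤ i' ℓ - i ℓ := by omega
  have := aux (i' ℓ - i ℓ).toNat (by omega)
  rw [Int.toNat_of_nonneg hnn] at this
  have heq : Function.update i' ℓ (i ℓ + (i' ℓ - i ℓ)) = i' := by
    have : i ℓ + (i' ℓ - i ℓ) = i' ℓ := by ring
    rw [this]
    exact Function.update_eq_self ℓ i'
  rw [heq] at this
  omega

/-- Iterated ancestor map: from level `m + k` down to level `m`. -/
noncomputable def anc (m k : ℕ) (i : Fin d → ℤ) : Fin d → ℤ :=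
  Nat.rec (motive := fun _ => (Fin d → ℤ) → (Fin d → ℤ)) id
    (fun k ih => fun i => ih (F.par (m+k) i)) k i

@[simp] lemma anc_zero (m : ℕ) (i : Fin d → ℤ) : F.anc m 0 i = i := rfl

lemma anc_succ (m k : ℕ) (i : Fin d → ℤ) :
    F.anc m (k+1) i = F.anc m k (F.par (m+k) i) := rfl

lemma anc_spec (m : ℕ) : ∀ (k : ℕ) (i : Fin d → ℤ), i ∈ F.Λ (m+k) →
    F.anc m k i ∈ F.Λ m ∧ F.atom (m+k) i ⊆ F.atom m (F.anc m k i) := by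
  intro k
  induction k with
  | zero => exact fun i hi => ⟨hi, le_refl _⟩
  | succ k ih =>
    intro i hi
    have h1 : F.par (m+k) i ∈ F.Λ (m+k) := F.par_mem hi
    have h2 := F.par_sub (n := m+k) hi
    obtain ⟨ha, hb⟩ := ih _ h1
    exact ⟨ha, subset_trans h2 hb⟩

lemma anc_lip (m : ℕ) : ∀ (k : ℕ) (i i' : Fin d → ℤ), i ∈ F.Λ (m+k) → i' ∈ F.Λ (m+k) →
    ∀ ℓ : Fin d, i ℓ ≤ i' ℓ →
      F.anc m k i ℓ ≤ F.anc m k i' ℓ ∧ F.anc m k i' ℓ - F.anc m k i ℓ ≤ i' ℓ - i ℓ := by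
  intro k
  induction k with
  | zero =>
    intro i i' _ _ ℓ h
    simp only [anc_zero]
    exact ⟨h, by omega⟩
  | succ k ih =>
    intro i i' hi hi' ℓ hle
    have h1 : F.par (m+k) i ∈ F.Λ (m+k) := F.par_mem hi
    have h1' : F.par (m+k) i' ∈ F.Λ (m+k) := F.par_mem hi'
    have hm := F.par_mono hi hi' hle
    have hl := F.par_lip hi hi' hle
    obtain ⟨c1, c2⟩ := ih _ _ h1 h1' ℓ hm
    have hl' : F.par (m+k) i' ℓ - F.par (m+k) i ℓ ≤ i' ℓ - i ℓ := hl
    rw [F.anc_succ m k i, F.anc_succ m k i']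
    exact ⟨c1, by omega⟩

lemma anc_unique {m k : ℕ} {i j' : Fin d → ℤ} (hi : i ∈ F.Λ (m+k)) (hj' : j' ∈ F.Λ m)
    (hsub : F.atom (m+k) i ⊆ F.atom m j') : F.anc m k i = j' := by
  by_contra hne
  have hd := F.hdisj m (by exact_mod_cast (F.anc_spec m k i hi).1) (by exact_mod_cast hj') hne
  obtain ⟨x, hx⟩ := F.atom_nonempty hi
  exact Set.disjoint_left.1 hd ((F.anc_spec m k i hi).2 hx) (hsub hx)


lemma csInf_Ioc_union {a1 b1 a2 b2 : ℝ} (h1 : a1 < b1) (h2 : a2 < b2) :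
    sInf (Set.Ioc a1 b1 ∪ Set.Ioc a2 b2) = min a1 a2 := by
  apply le_antisymm
  · have h3 : sInf (Set.Ioc a1 b1 ∪ Set.Ioc a2 b2) ≤ sInf (Set.Ioc a1 b1) :=
      csInf_le_csInf (BddBelow.union bddBelow_Ioc bddBelow_Ioc)
        (Set.nonempty_Ioc.2 h1) Set.subset_union_left
    have h4 : sInf (Set.Ioc a1 b1 ∪ Set.Ioc a2 b2) ≤ sInf (Set.Ioc a2 b2) :=
      csInf_le_csInf (BddBelow.union bddBelow_Ioc bddBelow_Ioc)
        (Set.nonempty_Ioc.2 h2) Set.subset_union_right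
    rw [csInf_Ioc h1] at h3
    rw [csInf_Ioc h2] at h4
    exact le_min h3 h4
  · apply le_csInf ((Set.nonempty_Ioc.2 h1).mono Set.subset_union_left)
    rintro w (hw | hw)
    · exact le_trans (min_le_left _ _) (le_of_lt hw.1)
    · exact le_trans (min_le_right _ _) (le_of_lt hw.1)

lemma csSup_Ioc_union {a1 b1 a2 b2 : ℝ} (h1 : a1 < b1) (h2 : a2 < b2) :
    sSup (Set.Ioc a1 b1 ∪ Set.Ioc a2 b2) = max b1 b2 := by
  apply le_antisymm
  · apply csSup_le ((Set.nonempty_Ioc.2 h1).mono Set.subset_union_left)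
    rintro w (hw | hw)
    · exact le_trans hw.2 (le_max_left _ _)
    · exact le_trans hw.2 (le_max_right _ _)
  · have k1 : sSup (Set.Ioc a1 b1) ≤ sSup (Set.Ioc a1 b1 ∪ Set.Ioc a2 b2) :=
      csSup_le_csSup (BddAbove.union bddAbove_Ioc bddAbove_Ioc)
        (Set.nonempty_Ioc.2 h1) Set.subset_union_left
    have k2 : sSup (Set.Ioc a2 b2) ≤ sSup (Set.Ioc a1 b1 ∪ Set.Ioc a2 b2) :=
      csSup_le_csSup (BddAbove.union bddAbove_Ioc bddAbove_Ioc)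
        (Set.nonempty_Ioc.2 h2) Set.subset_union_right
    rw [csSup_Ioc h1] at k1
    rw [csSup_Ioc h2] at k2
    exact max_le k1 k2

lemma hull_bounds {m : ℕ} {i1 i2 : Fin d → ℤ} (h1 : i1 ∈ F.Λ m) (h2 : i2 ∈ F.Λ m) (ℓ : Fin d) :
    sInf ((fun z => z ℓ) '' (F.atom m i1 ∪ F.atom m i2)) = min (F.LO m i1 ℓ) (F.LO m i2 ℓ) ∧
    sSup ((fun z => z ℓ) '' (F.atom m i1 ∪ F.atom m i2)) = max (F.HI m i1 ℓ) (F.HI m i2 ℓ) := by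
  rw [Set.image_union, F.proj_atom h1 ℓ, F.proj_atom h2 ℓ]
  exact ⟨csInf_Ioc_union (F.lo_lt_hi h1 ℓ) (F.lo_lt_hi h2 ℓ),
    csSup_Ioc_union (F.lo_lt_hi h1 ℓ) (F.lo_lt_hi h2 ℓ)⟩

/-- Claim A: a base atom whose shifted target is contained in the target of a coarser
pair lies inside the rectangular hull of the coarser pair. -/
lemma claimA {m k : ℕ} {j ν jst : Fin d → ℤ} (hj : j ∈ F.Λ (m+k)) (hjν : j + ν ∈ F.Λ (m+k))
    (hjst : jst ∈ F.Λ m) (hjstν : jst + ν ∈ F.Λ m)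
    (hsub : F.atom (m+k) (j + ν) ⊆ F.atom m (jst + ν)) :
    F.atom (m+k) j ⊆ rectHull (F.atom m (jst + ν) ∪ F.atom m jst) := by
  have hancT : F.anc m k (j + ν) = jst + ν := F.anc_unique hjν hjstν hsub
  have hancJmem := (F.anc_spec m k j hj).1
  have hancJsub := (F.anc_spec m k j hj).2
  have hbound : ∀ ℓ : Fin d,
      min (F.LO m (jst + ν) ℓ) (F.LO m jst ℓ) ≤ F.LO m (F.anc m k j) ℓ ∧
      F.HI m (F.anc m k j) ℓ ≤ max (F.HI m (jst + ν) ℓ) (F.HI m jst ℓ) := by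
    intro ℓ
    by_cases hν : 0 ≤ ν ℓ
    · have hle : j ℓ ≤ (j + ν) ℓ := by simp; omega
      obtain ⟨c1, c2⟩ := F.anc_lip m k j (j + ν) hj hjν ℓ hle
      rw [hancT] at c1 c2
      have e1 : jst ℓ ≤ F.anc m k j ℓ := by simp at c2 ⊢; omega
      have e2 : F.anc m k j ℓ ≤ (jst + ν) ℓ := c1
      constructor
      · exact le_trans (min_le_right _ _) (F.lo_mono hjst hancJmem e1)
      · exact le_trans (F.hi_mono hancJmem hjstν e2) (le_max_left _ _)
    · push_neg at hν
      have hle : (j + ν) ℓ ≤ j ℓ := by simp; omega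
      obtain ⟨c1, c2⟩ := F.anc_lip m k (j + ν) j hjν hj ℓ hle
      rw [hancT] at c1 c2
      have e1 : (jst + ν) ℓ ≤ F.anc m k j ℓ := c1
      have e2 : F.anc m k j ℓ ≤ jst ℓ := by simp at c2 ⊢; omega
      constructor
      · exact le_trans (min_le_left _ _) (F.lo_mono hjstν hancJmem e1)
      · exact le_trans (F.hi_mono hancJmem hjst e2) (le_max_right _ _)
  intro x hx
  have hx' := (F.mem_atom hancJmem).1 (hancJsub hx)
  intro ℓ
  rw [(F.hull_bounds hjstν hjst ℓ).1, (F.hull_bounds hjstν hjst ℓ).2]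
  exact ⟨le_trans (hbound ℓ).1 (le_of_lt (hx' ℓ).1),
    le_trans (hx' ℓ).2 (hbound ℓ).2⟩

lemma atom_eq_pi {n : ℕ} {i : Fin d → ℤ} (h : i ∈ F.Λ n) :
    F.atom n i = Set.univ.pi fun ℓ => Set.Ioc (F.LO n i ℓ) (F.HI n i ℓ) := by
  ext x
  rw [F.mem_atom h]
  simp [Set.mem_pi]

lemma vol_atom_pos {n : ℕ} {i : Fin d → ℤ} (h : i ∈ F.Λ n) : 0 < volume (F.atom n i) := by
  rw [F.atom_eq_pi h, volume_pi_pi]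
  refine CanonicallyOrderedAdd.prod_pos.2 fun ℓ _ => ?_
  rw [Real.volume_Ioc]
  exact ENNReal.ofReal_pos.2 (by linarith [F.lo_lt_hi h ℓ])

lemma atom_subset_hull {m : ℕ} {i1 i2 : Fin d → ℤ} (h1 : i1 ∈ F.Λ m) (h2 : i2 ∈ F.Λ m) :
    F.atom m i1 ⊆ rectHull (F.atom m i1 ∪ F.atom m i2) := by
  intro x hx ℓ
  rw [(F.hull_bounds h1 h2 ℓ).1, (F.hull_bounds h1 h2 ℓ).2]
  have := (F.mem_atom h1).1 hx ℓ
  exact ⟨le_trans (min_le_left _ _) (le_of_lt this.1),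
    le_trans this.2 (le_max_left _ _)⟩

lemma hull_subset_box {m : ℕ} {i1 i2 : Fin d → ℤ} (h1 : i1 ∈ F.Λ m) (h2 : i2 ∈ F.Λ m) :
    rectHull (F.atom m i1 ∪ F.atom m i2) ⊆ Set.univ.pi fun _ : Fin d => Set.Icc F.a F.b := by
  intro x hx
  rw [Set.mem_pi]
  intro ℓ _
  have h := hx ℓ
  rw [(F.hull_bounds h1 h2 ℓ).1, (F.hull_bounds h1 h2 ℓ).2] at h
  constructor
  · exact le_trans (le_min (F.a_le_lo h1 ℓ) (F.a_le_lo h2 ℓ)) h.1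
  · exact le_trans h.2 (max_le (F.hi_le_b h1 ℓ) (F.hi_le_b h2 ℓ))

lemma vol_hull_lt_top {m : ℕ} {i1 i2 : Fin d → ℤ} (h1 : i1 ∈ F.Λ m) (h2 : i2 ∈ F.Λ m) :
    volume (rectHull (F.atom m i1 ∪ F.atom m i2)) < ⊤ := by
  apply lt_of_le_of_lt (measure_mono (F.hull_subset_box h1 h2))
  rw [volume_pi_pi]
  exact ENNReal.prod_lt_top fun ℓ _ => by rw [Real.volume_Icc]; exact ENNReal.ofReal_lt_top

lemma vol_hull_pos {m : ℕ} {i1 i2 : Fin d → ℤ} (h1 : i1 ∈ F.Λ m) (h2 : i2 ∈ F.Λ m) :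
    0 < volume (rectHull (F.atom m i1 ∪ F.atom m i2)) :=
  lt_of_lt_of_le (F.vol_atom_pos h1) (measure_mono (F.atom_subset_hull h1 h2))

end IF

section Geom

variable {r : ℝ}

lemma geom_range_le (hr0 : 0 ≤ r) (hr1 : r < 1) (N : ℕ) :
    ∑ m ∈ Finset.range N, r ^ m ≤ 1 / (1 - r) := by
  have h1 : (0:ℝ) < 1 - r := by linarith
  have h2 : (∑ m ∈ Finset.range N, r ^ m) * (1 - r) = 1 - r ^ N := by
    have := geom_sum_mul r N
    linarith [this]
  have h3 : (∑ m ∈ Finset.range N, r ^ m) * (1 - r) ≤ 1 := by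
    rw [h2]
    have : 0 ≤ r ^ N := pow_nonneg hr0 N
    linarith
  rw [le_div_iff₀ h1]
  exact h3

lemma sum_int_geom (hr0 : 0 ≤ r) (hr1 : r < 1) (G : Finset ℤ) (j : ℤ) :
    ∑ k ∈ G, r ^ (k - j).natAbs ≤ 2 / (1 - r) := by
  classical
  have h1 : (0:ℝ) < 1 - r := by linarith
  rw [← Finset.sum_filter_add_sum_filter_not G (fun k => j ≤ k)]
  have key : ∀ (P : Finset ℤ) (f : ℤ → ℕ), Set.InjOn f P →
      ∑ k ∈ P, r ^ f k ≤ 1 / (1 - r) := by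
    intro P f hinj
    have himg : ∑ m ∈ P.image f, r ^ m = ∑ k ∈ P, r ^ f k :=
      Finset.sum_image (fun x hx y hy h => hinj hx hy h)
    rw [← himg]
    apply le_trans (Finset.sum_le_sum_of_subset_of_nonneg
      (Finset.subset_iff.2 fun m hm => Finset.mem_range.2
        (Nat.lt_succ_of_le (Finset.le_sup (f := id) hm))) fun m _ _ => pow_nonneg hr0 m)
    exact geom_range_le hr0 hr1 _
  have b1 : ∑ k ∈ G.filter (fun k => j ≤ k), r ^ (k - j).natAbs ≤ 1 / (1 - r) :=
    key _ _ (fun x hx y hy h => by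
      simp only [Finset.coe_filter, Set.mem_setOf_eq] at hx hy
      omega)
  have b2 : ∑ k ∈ G.filter (fun k => ¬ j ≤ k), r ^ (k - j).natAbs ≤ 1 / (1 - r) :=
    key _ _ (fun x hx y hy h => by
      simp only [Finset.coe_filter, Set.mem_setOf_eq] at hx hy
      omega)
  have : 2 / (1 - r) = 1 / (1 - r) + 1 / (1 - r) := by ring
  rw [this]
  exact add_le_add b1 b2

lemma sum_box_geom {d : ℕ} (hr0 : 0 ≤ r) (hr1 : r < 1) (G : Finset (Fin d → ℤ))
    (j : Fin d → ℤ) : ∑ i ∈ G, r ^ dist1 i j ≤ (2 / (1 - r)) ^ d := by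
  classical
  have hterm : ∀ i : Fin d → ℤ, r ^ dist1 i j = ∏ ℓ, r ^ (i ℓ - j ℓ).natAbs := by
    intro i
    rw [dist1, ← Finset.prod_pow_eq_pow_sum]
  calc ∑ i ∈ G, r ^ dist1 i j
      = ∑ i ∈ G, ∏ ℓ, r ^ (i ℓ - j ℓ).natAbs := by
        exact Finset.sum_congr rfl fun i _ => hterm i
    _ ≤ ∑ i ∈ Fintype.piFinset (fun ℓ => G.image (fun w => w ℓ)), ∏ ℓ, r ^ (i ℓ - j ℓ).natAbs := by
        apply Finset.sum_le_sum_of_subset_of_nonneg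
        · intro i hi
          rw [Fintype.mem_piFinset]
          exact fun ℓ => Finset.mem_image_of_mem _ hi
        · intro i _ _
          exact Finset.prod_nonneg fun ℓ _ => pow_nonneg hr0 _
    _ = ∏ ℓ, ∑ k ∈ G.image (fun w => w ℓ), r ^ (k - j ℓ).natAbs := by
        rw [Finset.prod_univ_sum]
    _ ≤ ∏ _ℓ : Fin d, (2 / (1 - r)) := by
        apply Finset.prod_le_prod
        · intro ℓ _
          exact Finset.sum_nonneg fun k _ => pow_nonneg hr0 _
        · intro ℓ _
          exact sum_int_geom hr0 hr1 _ _
    _ = (2 / (1 - r)) ^ d := by rw [Finset.prod_const, Finset.card_univ, Fintype.card_fin]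

end Geom


section Machinery

variable {d : ℕ} (F : IF d) (θ : Set (Fin d → ℝ) → ℝ≥0∞) (q r C0 t : ℝ)
  (B : Set (Fin d → ℝ)) (K : ℕ)

/-- A "member" at shift `ν`: a pair of atoms at level `n ≥ K` at index-offset `ν`,
whose base meets `B` and which witnesses a large value of the summand. -/
def Member (ν : Fin d → ℤ) (n : ℕ) (j : Fin d → ℤ) : Prop :=
  K ≤ n ∧ j ∈ F.Λ n ∧ j + ν ∈ F.Λ n ∧ (F.atom n j ∩ B).Nonempty ∧
    ENNReal.ofReal t * ENNReal.ofReal (r ^ dist1 ν 0) *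
      volume (rectHull (F.atom n (j + ν) ∪ F.atom n j)) <
    ENNReal.ofReal C0 * ENNReal.ofReal q ^ dist1 ν 0 * θ (F.atom n (j + ν))

/-- A leader: a member whose target atom is not contained in the target of any
strictly coarser member. -/
def Leader (ν : Fin d → ℤ) (p : ℕ × (Fin d → ℤ)) : Prop :=
  Member F θ q r C0 t B K ν p.1 p.2 ∧
    ∀ m j', Member F θ q r C0 t B K ν m j' →
      F.atom p.1 (p.2 + ν) ⊆ F.atom m (j' + ν) → p.1 ≤ m

lemma nested_of_not_disjoint {n k : ℕ} {i i' : Fin d → ℤ} (hi : i ∈ F.Λ (n + k))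
    (hi' : i' ∈ F.Λ n) (h : ¬ Disjoint (F.atom (n + k) i) (F.atom n i')) :
    F.atom (n + k) i ⊆ F.atom n i' := by
  obtain ⟨hmem, hsub⟩ := F.anc_spec n k i hi
  by_cases he : F.anc n k i = i'
  · rwa [he] at hsub
  · exfalso
    apply h
    exact Set.disjoint_of_subset_left hsub
      (F.hdisj n (by exact_mod_cast hmem) (by exact_mod_cast hi') he)

lemma exists_leader {ν : Fin d → ℤ} {n : ℕ} {j : Fin d → ℤ}
    (h : Member F θ q r C0 t B K ν n j) :
    ∃ p : ℕ × (Fin d → ℤ), Leader F θ q r C0 t B K ν p ∧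
      F.atom n (j + ν) ⊆ F.atom p.1 (p.2 + ν) ∧ p.1 ≤ n := by
  classical
  set P : ℕ → Prop := fun m => ∃ j', Member F θ q r C0 t B K ν m j' ∧
    F.atom n (j + ν) ⊆ F.atom m (j' + ν) with hP
  have hPn : P n := ⟨j, h, subset_rfl⟩
  have hfind := Nat.find_spec (⟨n, hPn⟩ : ∃ m, P m)
  obtain ⟨j0, hj0mem, hj0sub⟩ := hfind
  refine ⟨(Nat.find (⟨n, hPn⟩ : ∃ m, P m), j0), ⟨hj0mem, ?_⟩, hj0sub,
    Nat.find_le hPn⟩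
  intro m j' hm hsub
  exact Nat.find_le ⟨j', hm, subset_trans hj0sub hsub⟩

lemma leader_cover {ν : Fin d → ℤ} {n : ℕ} {j : Fin d → ℤ}
    (h : Member F θ q r C0 t B K ν n j) {p : ℕ × (Fin d → ℤ)}
    (hp : Member F θ q r C0 t B K ν p.1 p.2)
    (hsub : F.atom n (j + ν) ⊆ F.atom p.1 (p.2 + ν)) (hle : p.1 ≤ n) :
    F.atom n j ⊆ rectHull (F.atom p.1 (p.2 + ν) ∪ F.atom p.1 p.2) := by
  have hn : n = p.1 + (n - p.1) := by omega
  rw [hn] at h hsub ⊢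
  exact F.claimA h.2.1 h.2.2.1 hp.2.1 hp.2.2.1 hsub

lemma leaders_disjoint {ν : Fin d → ℤ} {p p' : ℕ × (Fin d → ℤ)}
    (hp : Leader F θ q r C0 t B K ν p) (hp' : Leader F θ q r C0 t B K ν p')
    (hne : p ≠ p') :
    Disjoint (F.atom p.1 (p.2 + ν)) (F.atom p'.1 (p'.2 + ν)) := by
  -- A symmetric helper: if levels are ordered and targets intersect, contradiction.
  have key : ∀ pa pb : ℕ × (Fin d → ℤ), Leader F θ q r C0 t B K ν pa →
      Leader F θ q r C0 t B K ν pb → pa ≠ pb → pa.1 ≤ pb.1 →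
      Disjoint (F.atom pa.1 (pa.2 + ν)) (F.atom pb.1 (pb.2 + ν)) := by
    intro pa pb hpa hpb hab hlev
    by_contra hdis
    have hdis0 := hdis
    have hk : pb.1 = pa.1 + (pb.1 - pa.1) := by omega
    rw [hk] at hdis
    have hsub := nested_of_not_disjoint F
      (by rw [← hk]; exact hpb.1.2.2.1) hpa.1.2.2.1 (fun hd => hdis hd.symm)
    rw [← hk] at hsub
    rcases Nat.lt_or_ge pa.1 pb.1 with hlt | hge
    · -- pb is a leader, but its target is inside a strictly coarser member's target
      have := hpb.2 pa.1 pa.2 hpa.1 hsub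
      omega
    · -- equal levels: targets intersect at the same level, so indices coincide
      have heq : pa.1 = pb.1 := by omega
      have hind : pa.2 + ν = pb.2 + ν := by
        by_contra hne2
        apply hdis0
        have h1 : pa.2 + ν ∈ F.Λ pb.1 := heq ▸ hpa.1.2.2.1
        have hd2 := F.hdisj pb.1 (by exact_mod_cast h1) (by exact_mod_cast hpb.1.2.2.1) hne2
        rw [heq]
        exact hd2
      have : pa.2 = pb.2 := by
        funext ℓ
        have := congrFun hind ℓ
        simp at this
        omega
      exact absurd (Prod.ext heq this) hab
  rcases Nat.le_total p.1 p'.1 with hle | hle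
  · exact key p p' hp hp' hne hle
  · exact (key p' p hp' hp (Ne.symm hne) hle).symm


lemma target_subset_nbhd {ν : Fin d → ℤ} {n : ℕ} {j : Fin d → ℤ}
    (h : Member F θ q r C0 t B K ν n j) :
    F.atom n (j + ν) ⊆ nbhdUnion F.Λ F.atom K (dist1 ν 0) B := by
  obtain ⟨hK, hjm, hjνm, hne, _⟩ := h
  have hn : n = K + (n - K) := by omega
  rw [hn] at hjm hjνm
  set k := n - K with hk
  have hQt := F.anc_spec K k (j + ν) hjνm
  have hQb := F.anc_spec K k j hjm
  have hdist : dist1 (F.anc K k (j + ν)) (F.anc K k j) ≤ dist1 ν 0 := by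
    rw [dist1, dist1]
    apply Finset.sum_le_sum
    intro ℓ _
    by_cases hν : 0 ≤ ν ℓ
    · obtain ⟨c1, c2⟩ := F.anc_lip K k j (j + ν) hjm hjνm ℓ (by simp; omega)
      simp at c2 ⊢
      omega
    · obtain ⟨c1, c2⟩ := F.anc_lip K k (j + ν) j hjνm hjm ℓ (by simp; omega)
      simp at c2 ⊢
      omega
  intro y hy
  rw [nbhdUnion, Set.mem_iUnion]
  refine ⟨F.anc K k (j + ν), ?_⟩
  rw [Set.mem_iUnion]
  refine ⟨⟨hQt.1, F.anc K k j, hQb.1, hdist, ?_⟩, ?_⟩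
  · obtain ⟨z, hz1, hz2⟩ := hne
    exact ⟨z, hQb.2 (by rw [← hn] at hjm ⊢; exact hz1), hz2⟩
  · exact hQt.2 (by rw [← hn] at hjνm ⊢; exact hy)

lemma member_vol_bound (hr0 : 0 ≤ r) (hq0 : 0 ≤ q) (hq : q = r ^ 4) (ht : 0 < t)
    (hC0 : 0 ≤ C0) {ν : Fin d → ℤ} {n : ℕ} {j : Fin d → ℤ} (h : Member F θ q r C0 t B K ν n j) :
    volume (rectHull (F.atom n (j + ν) ∪ F.atom n j)) ≤
      ENNReal.ofReal (C0 * r ^ (3 * dist1 ν 0) / t) * θ (F.atom n (j + ν)) := by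
  obtain ⟨hK, hjm, hjνm, hne, hineq⟩ := h
  set s := dist1 ν 0 with hs
  by_cases hr : r = 0 ∧ s ≠ 0
  · exfalso
    have hqz : q = 0 := by rw [hq, hr.1]; simp
    rw [hqz] at hineq
    simp only [ENNReal.ofReal_zero, zero_pow hr.2, mul_zero, zero_mul] at hineq
    exact (not_lt_of_ge zero_le) hineq
  · have hrs : 0 < r ^ s := by
      rcases eq_or_lt_of_le hr0 with h0 | h0
      · have : s = 0 := by
          by_contra hs0
          exact hr ⟨h0.symm, hs0⟩
        rw [this]
        simp
      · exact pow_pos h0 s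
    have hA : (0:ℝ) < t * r ^ s := mul_pos ht hrs
    have hkey : volume (rectHull (F.atom n (j + ν) ∪ F.atom n j)) ≤
        (ENNReal.ofReal C0 * ENNReal.ofReal q ^ s * θ (F.atom n (j + ν))) /
          ENNReal.ofReal (t * r ^ s) := by
      rw [ENNReal.le_div_iff_mul_le (Or.inl (by simp [hA])) (Or.inl (by simp))]
      rw [ENNReal.ofReal_mul (le_of_lt ht)]
      calc volume (rectHull (F.atom n (j + ν) ∪ F.atom n j)) *
            (ENNReal.ofReal t * ENNReal.ofReal (r ^ s))
          = ENNReal.ofReal t * ENNReal.ofReal (r ^ s) *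
            volume (rectHull (F.atom n (j + ν) ∪ F.atom n j)) := by ring
        _ ≤ ENNReal.ofReal C0 * ENNReal.ofReal q ^ s * θ (F.atom n (j + ν)) :=
            le_of_lt hineq
    apply le_trans hkey
    apply le_of_eq
    rw [← ENNReal.ofReal_pow hq0, ← ENNReal.ofReal_mul hC0]
    rw [div_eq_mul_inv, mul_right_comm, ← div_eq_mul_inv]
    rw [← ENNReal.ofReal_div_of_pos hA]
    congr 1
    rw [ENNReal.ofReal_eq_ofReal_iff (by positivity) (by positivity)]
    have h4 : q ^ s = r ^ s * r ^ (3 * s) := by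
      rw [hq, ← pow_mul, ← pow_add]
      congr 1
      omega
    rw [h4]
    field_simp

lemma exists_member (hr0 : 0 ≤ r) (hr1 : r < 1) (ht : 0 < t)
    (hC0 : C0 = (2 / (1 - r)) ^ d) {n : ℕ} (hK : K ≤ n) {x : Fin d → ℝ}
    (hxB : x ∈ B) {j : Fin d → ℤ} (hj : j ∈ F.Λ n) (hxj : x ∈ F.atom n j)
    (hsum : ENNReal.ofReal t < ∑ i ∈ F.Λ n,
      ENNReal.ofReal q ^ dist1 i j * θ (F.atom n i) /
        volume (rectHull (F.atom n i ∪ F.atom n j))) :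
    ∃ ν : Fin d → ℤ, Member F θ q r C0 t B K ν n j := by
  by_contra hcon
  push_neg at hcon
  have h1r : (0:ℝ) < 1 - r := by linarith
  have hC0pos : (0:ℝ) < C0 := by
    rw [hC0]
    exact pow_pos (div_pos two_pos h1r) d
  have hterm : ∀ i ∈ F.Λ n,
      ENNReal.ofReal C0 * (ENNReal.ofReal q ^ dist1 i j * θ (F.atom n i) /
        volume (rectHull (F.atom n i ∪ F.atom n j))) ≤
      ENNReal.ofReal t * ENNReal.ofReal (r ^ dist1 i j) := by
    intro i hi
    have hji : j + (i - j) = i := by funext ℓ; simp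
    have hd : dist1 (i - j) 0 = dist1 i j := by
      rw [dist1, dist1]
      apply Finset.sum_congr rfl
      intro ℓ _
      simp
    have hnm := hcon (i - j)
    rw [Member] at hnm
    push_neg at hnm
    have hle := hnm hK hj (by rw [hji]; exact hi) ⟨x, hxj, hxB⟩
    rw [hji, hd] at hle
    set V := volume (rectHull (F.atom n i ∪ F.atom n j)) with hV
    calc ENNReal.ofReal C0 * (ENNReal.ofReal q ^ dist1 i j * θ (F.atom n i) / V)
        = (ENNReal.ofReal C0 * ENNReal.ofReal q ^ dist1 i j * θ (F.atom n i)) / V := by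
          rw [← mul_div_assoc, ← mul_assoc]
      _ ≤ (ENNReal.ofReal t * ENNReal.ofReal (r ^ dist1 i j) * V) / V :=
          ENNReal.div_le_div_right hle V
      _ = (ENNReal.ofReal t * ENNReal.ofReal (r ^ dist1 i j)) * (V / V) := by
          rw [mul_div_assoc]
      _ ≤ (ENNReal.ofReal t * ENNReal.ofReal (r ^ dist1 i j)) * 1 :=
          mul_le_mul_right ENNReal.div_self_le_one _
      _ = ENNReal.ofReal t * ENNReal.ofReal (r ^ dist1 i j) := by rw [mul_one]
  have hchain : ENNReal.ofReal C0 * ENNReal.ofReal t <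
      ENNReal.ofReal C0 * ENNReal.ofReal t := by
    calc ENNReal.ofReal C0 * ENNReal.ofReal t
        < ENNReal.ofReal C0 * ∑ i ∈ F.Λ n,
            ENNReal.ofReal q ^ dist1 i j * θ (F.atom n i) /
              volume (rectHull (F.atom n i ∪ F.atom n j)) := by
          apply ENNReal.mul_lt_mul_right (by simp [hC0pos]) (by simp)
          exact hsum
      _ = ∑ i ∈ F.Λ n, ENNReal.ofReal C0 *
            (ENNReal.ofReal q ^ dist1 i j * θ (F.atom n i) /
              volume (rectHull (F.atom n i ∪ F.atom n j))) := by
          rw [Finset.mul_sum]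
      _ ≤ ∑ i ∈ F.Λ n, ENNReal.ofReal t * ENNReal.ofReal (r ^ dist1 i j) :=
          Finset.sum_le_sum hterm
      _ = ENNReal.ofReal t * ∑ i ∈ F.Λ n, ENNReal.ofReal (r ^ dist1 i j) := by
          rw [Finset.mul_sum]
      _ = ENNReal.ofReal t * ENNReal.ofReal (∑ i ∈ F.Λ n, r ^ dist1 i j) := by
          rw [ENNReal.ofReal_sum_of_nonneg]
          intro i _
          exact pow_nonneg hr0 _
      _ ≤ ENNReal.ofReal t * ENNReal.ofReal C0 := by
          apply mul_le_mul_right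
          apply ENNReal.ofReal_le_ofReal
          rw [hC0]
          exact sum_box_geom hr0 hr1 _ _
      _ = ENNReal.ofReal C0 * ENNReal.ofReal t := by rw [mul_comm]
  exact lt_irrefl _ hchain

end Machinery


section Accounting

variable {d : ℕ}

lemma theta_finsum_le {ι : Type*} (θ : Set (Fin d → ℝ) → ℝ≥0∞)
    (hmono : ∀ S T : Set (Fin d → ℝ), S ⊆ T → θ S ≤ θ T)
    (hadd : ∀ S T : Set (Fin d → ℝ), Disjoint S T → θ (S ∪ T) = θ S + θ T)
    (U : Set (Fin d → ℝ)) (s : Finset ι) (S : ι → Set (Fin d → ℝ))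
    (hdisj : (s : Set ι).Pairwise (Function.onFun Disjoint S)) (hsub : ∀ i ∈ s, S i ⊆ U) :
    ∑ i ∈ s, θ (S i) ≤ θ U := by
  classical
  have key : ∀ (s : Finset ι), (s : Set ι).Pairwise (Function.onFun Disjoint S) →
      ∑ i ∈ s, θ (S i) ≤ θ (⋃ i ∈ s, S i) := by
    intro s
    induction s using Finset.induction_on with
    | empty => intro _; simp
    | @insert a s' ha ih =>
      intro hp
      have hp' : ((s' : Set ι)).Pairwise (Function.onFun Disjoint S) := by
        apply hp.mono
        intro i hi
        simp [hi]
      have hdisj2 : Disjoint (S a) (⋃ i ∈ s', S i) := by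
        apply Set.disjoint_iUnion₂_right.2
        intro i hi
        exact hp (by simp) (by simp [hi]) (by rintro rfl; exact ha hi)
      rw [Finset.sum_insert ha, Finset.set_biUnion_insert, hadd _ _ hdisj2]
      exact add_le_add le_rfl (ih hp')
  apply le_trans (key s hdisj)
  apply hmono
  exact Set.iUnion₂_subset hsub

lemma theta_tsum_le {ι : Type*} [Countable ι] (θ : Set (Fin d → ℝ) → ℝ≥0∞)
    (hmono : ∀ S T : Set (Fin d → ℝ), S ⊆ T → θ S ≤ θ T)
    (hadd : ∀ S T : Set (Fin d → ℝ), Disjoint S T → θ (S ∪ T) = θ S + θ T)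
    (U : Set (Fin d → ℝ)) (S : ι → Set (Fin d → ℝ))
    (hdisj : Pairwise (Function.onFun Disjoint S)) (hsub : ∀ i, S i ⊆ U) :
    ∑' i, θ (S i) ≤ θ U := by
  rw [ENNReal.tsum_eq_iSup_sum]
  apply iSup_le
  intro s
  exact theta_finsum_le θ hmono hadd U s S (hdisj.set_pairwise _) (fun i _ => hsub i)

lemma card_intbox (s : ℕ) :
    (Fintype.piFinset fun _ : Fin d => Finset.Icc (-(s:ℤ)) (s:ℤ)).card = (2*s+1)^d := by
  rw [Fintype.card_piFinset]
  have h : (Finset.Icc (-(s:ℤ)) (s:ℤ)).card = 2*s+1 := by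
    rw [Int.card_Icc]
    omega
  simp only [h, Finset.prod_const, Finset.card_univ, Fintype.card_fin]

lemma regroup (f : ℕ → ℝ≥0∞) (U : (Fin d → ℤ) → Set (Fin d → ℝ))
    (hU : ∀ ν : Fin d → ℤ, volume (U ν) ≤ f (dist1 ν 0)) :
    volume (⋃ ν : Fin d → ℤ, U ν) ≤ ∑' s : ℕ, ((2*s+1)^d : ℕ) * f s := by
  apply le_trans (measure_iUnion_le U)
  have h1 : ∀ ν : Fin d → ℤ, f (dist1 ν 0) = ∑' s : ℕ, if dist1 ν 0 = s then f s else 0 := by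
    intro ν
    rw [tsum_eq_single (dist1 ν 0) (fun b hb => if_neg (fun h => hb (h.symm)))]
    simp
  calc ∑' ν : Fin d → ℤ, volume (U ν)
      ≤ ∑' ν : Fin d → ℤ, f (dist1 ν 0) := ENNReal.tsum_le_tsum hU
    _ = ∑' (ν : Fin d → ℤ) (s : ℕ), if dist1 ν 0 = s then f s else 0 := by
        exact tsum_congr h1
    _ = ∑' (s : ℕ) (ν : Fin d → ℤ), if dist1 ν 0 = s then f s else 0 := ENNReal.tsum_comm
    _ ≤ ∑' s : ℕ, ((2*s+1)^d : ℕ) * f s := by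
        apply ENNReal.tsum_le_tsum
        intro s
        have hsupp : ∀ ν : Fin d → ℤ,
            ν ∉ (Fintype.piFinset fun _ : Fin d => Finset.Icc (-(s:ℤ)) (s:ℤ)) →
            (if dist1 ν 0 = s then f s else 0) = 0 := by
          intro ν hν
          rw [if_neg]
          intro hd
          apply hν
          rw [Fintype.mem_piFinset]
          intro ℓ
          rw [Finset.mem_Icc]
          have : (ν ℓ - 0).natAbs ≤ s := hd ▸ Finset.single_le_sum
            (f := fun ℓ => (ν ℓ - 0).natAbs) (fun _ _ => Nat.zero_le _) (Finset.mem_univ ℓ)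
          omega
        rw [tsum_eq_sum hsupp]
        apply le_trans (Finset.sum_le_card_nsmul _ _ (f s)
          (fun ν _ => by split <;> simp))
        rw [card_intbox]
        simp [nsmul_eq_mul]

end Accounting


section Final

lemma final_numeric {d : ℕ} {q r C0 t : ℝ} (hd : 1 ≤ d) (hr0 : 0 ≤ r) (hr1 : r < 1)
    (ht : 0 < t) (hq : q = r ^ 4) (hC0 : C0 = (2 / (1 - r)) ^ d) (s : ℕ) :
    (((2*s+1)^d : ℕ) : ℝ≥0∞) * ENNReal.ofReal (C0 * r ^ (3*s) / t) ≤
      ENNReal.ofReal (C0 * 3 ^ d / (1 - r)) / ENNReal.ofReal t *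
        ENNReal.ofReal (Real.sqrt q ^ s * (s + 1 : ℝ) ^ (d - 1)) := by
  have h1r : (0:ℝ) < 1 - r := by linarith
  have hC0pos : (0:ℝ) < C0 := by rw [hC0]; exact pow_pos (div_pos two_pos h1r) d
  have hCreal : (0:ℝ) ≤ C0 * 3 ^ d / (1 - r) := by positivity
  have hsq : Real.sqrt q = r ^ 2 := by
    rw [hq, show r ^ 4 = (r ^ 2) ^ 2 by ring]
    exact Real.sqrt_sq (by positivity)
  rw [← ENNReal.ofReal_natCast ((2*s+1)^d),
    ← ENNReal.ofReal_mul (by positivity),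
    ← ENNReal.ofReal_div_of_pos ht,
    ← ENNReal.ofReal_mul (by positivity)]
  apply ENNReal.ofReal_le_ofReal
  have hNcast : ((((2*s+1)^d : ℕ)) : ℝ) = (2*(s:ℝ)+1)^d := by push_cast; ring
  have hr3 : r ^ (3*s) = (r^2)^s * r^s := by
    rw [← pow_mul, ← pow_add]
    congr 1
    ring
  have k1 : (2*(s:ℝ)+1)^d ≤ 3^d * ((s:ℝ)+1)^d := by
    rw [← mul_pow]
    apply pow_le_pow_left₀ (by positivity)
    have : (0:ℝ) ≤ (s:ℝ) := Nat.cast_nonneg s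
    linarith
  have k2 : ((s:ℝ)+1)^d = ((s:ℝ)+1)^(d-1) * ((s:ℝ)+1) := by
    conv_lhs => rw [show d = (d-1)+1 by omega]
    rw [pow_succ]
  have k3 : ((s:ℝ)+1) * r^s ≤ 1/(1-r) := by
    have hb : ((s:ℝ)+1) * r^s ≤ ∑ k ∈ Finset.range (s+1), r^k := by
      have := Finset.card_nsmul_le_sum (Finset.range (s+1)) (fun k => r^k) (r^s)
        (fun k hk => pow_le_pow_of_le_one hr0 (le_of_lt hr1)
          (Nat.le_of_lt_succ (Finset.mem_range.1 hk)))
      rw [Finset.card_range, nsmul_eq_mul] at this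
      push_cast at this
      linarith
    exact le_trans hb (geom_range_le hr0 hr1 _)
  have key : (2*(s:ℝ)+1)^d * r^s ≤ 3^d/(1-r) * ((s:ℝ)+1)^(d-1) := by
    calc (2*(s:ℝ)+1)^d * r^s
        ≤ (3^d * ((s:ℝ)+1)^d) * r^s :=
          mul_le_mul_of_nonneg_right k1 (pow_nonneg hr0 s)
      _ = (3^d * ((s:ℝ)+1)^(d-1)) * (((s:ℝ)+1) * r^s) := by rw [k2]; ring
      _ ≤ (3^d * ((s:ℝ)+1)^(d-1)) * (1/(1-r)) :=
          mul_le_mul_of_nonneg_left k3 (by positivity)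
      _ = 3^d/(1-r) * ((s:ℝ)+1)^(d-1) := by ring
  have core : (((2*s+1)^d : ℕ) : ℝ) * C0 * r^(3*s) ≤
      (C0 * 3 ^ d / (1 - r)) * (Real.sqrt q ^ s * ((s:ℝ) + 1) ^ (d - 1)) := by
    rw [hNcast, hr3, hsq]
    calc (2*(s:ℝ)+1)^d * C0 * ((r^2)^s * r^s)
        = (C0 * (r^2)^s) * ((2*(s:ℝ)+1)^d * r^s) := by ring
      _ ≤ (C0 * (r^2)^s) * (3^d/(1-r) * ((s:ℝ)+1)^(d-1)) :=
          mul_le_mul_of_nonneg_left key (by positivity)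
      _ = (C0 * 3 ^ d / (1 - r)) * ((r^2) ^ s * ((s:ℝ) + 1) ^ (d - 1)) := by ring
  calc (((2*s+1)^d : ℕ) : ℝ) * (C0 * r ^ (3*s) / t)
      = ((((2*s+1)^d : ℕ) : ℝ) * C0 * r^(3*s)) / t := by ring
    _ ≤ ((C0 * 3 ^ d / (1 - r)) * (Real.sqrt q ^ s * ((s:ℝ) + 1) ^ (d - 1))) / t := by
        gcongr
    _ = C0 * 3 ^ d / (1 - r) / t * (Real.sqrt q ^ s * ((s:ℝ) + 1) ^ (d - 1)) := by ring

end Final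


/-- the maximal inequality for interval filtrations on `I^d`.  There is a
constant `C = C(q,d)` such that for every interval filtration on the cube `I^d`, every
non-negative finitely additive measure `θ` on the algebra generated by the atoms, every
Borel set `B ⊆ I^d`, every `K ≥ 1` and every `t > 0`,
`|B ∩ {M_K θ > t}| ≤ (C/t) ∑_s q^{s/2}(s+1)^{d-1} θ(A_{K,s}(B))`. -/
theorem tensor_spline_maximal_inequality
    (d : ℕ) (hd : 1 ≤ d) (q : ℝ) (hq0 : 0 ≤ q) (hq1 : q < 1) :
    ∃ C : ℝ≥0∞, C ≠ ∞ ∧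
      ∀ (a b : ℝ), a < b →
      ∀ (Λ : ℕ → Finset (Fin d → ℤ)) (atom : ℕ → (Fin d → ℤ) → Set (Fin d → ℝ))
        (An : ℕ → (Fin d → ℝ) → Fin d → ℤ) (θ : Set (Fin d → ℝ) → ℝ≥0∞),
      -- the index sets are boxes of consecutive integers
      (∀ n, ∃ lo hi : Fin d → ℤ,
        Λ n = Fintype.piFinset fun ℓ => Finset.Icc (lo ℓ) (hi ℓ)) →
      -- the atoms are nonempty half-open rectangles
      (∀ n, ∀ i ∈ Λ n, ∃ lo hi : Fin d → ℝ, (∀ ℓ, lo ℓ < hi ℓ) ∧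
        atom n i = {x | ∀ ℓ, lo ℓ < x ℓ ∧ x ℓ ≤ hi ℓ}) →
      -- at each level the atoms form a partition of the cube I^d, I = (a,b]
      (∀ n, ((Λ n : Set (Fin d → ℤ)).PairwiseDisjoint (atom n)) ∧
        (⋃ i ∈ Λ n, atom n i) = Set.univ.pi fun _ : Fin d => Set.Ioc a b) →
      -- the levels form a filtration: each atom is contained in an atom one level down
      (∀ n, ∀ i ∈ Λ (n + 1), ∃ j ∈ Λ n, atom (n + 1) i ⊆ atom n j) →
      -- the atoms are indexed monotonically, coordinate by coordinate
      (∀ n, ∀ i ∈ Λ n, ∀ j ∈ Λ n, ∀ ℓ : Fin d, i ℓ < j ℓ →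
        ∀ x ∈ atom n i, ∀ y ∈ atom n j, x ℓ ≤ y ℓ) →
      -- A_n(x) = atom n (An n x) is the atom of level n containing x
      (∀ n, ∀ x ∈ (Set.univ.pi fun _ : Fin d => Set.Ioc a b),
        An n x ∈ Λ n ∧ x ∈ atom n (An n x)) →
      -- θ is a non-negative finitely additive (monotone) measure
      (∀ S T : Set (Fin d → ℝ), S ⊆ T → θ S ≤ θ T) →
      (∀ S T : Set (Fin d → ℝ), Disjoint S T → θ (S ∪ T) = θ S + θ T) →
      ∀ B : Set (Fin d → ℝ), MeasurableSet B →
        B ⊆ (Set.univ.pi fun _ : Fin d => Set.Ioc a b) →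
      ∀ K : ℕ, 1 ≤ K → ∀ t : ℝ, 0 < t →
      volume (B ∩ {x | ENNReal.ofReal t < maxFn q θ Λ atom An K x}) ≤
        C / ENNReal.ofReal t *
          ∑' s : ℕ, ENNReal.ofReal (Real.sqrt q ^ s * (s + 1 : ℝ) ^ (d - 1)) *
            θ (nbhdUnion Λ atom K s B) := by
  classical
  set r : ℝ := Real.sqrt (Real.sqrt q) with hrdef
  have hr0 : 0 ≤ r := Real.sqrt_nonneg _
  have hsq1 : Real.sqrt q < 1 := by
    rw [show (1:ℝ) = Real.sqrt 1 by simp]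
    exact Real.sqrt_lt_sqrt hq0 hq1
  have hr1 : r < 1 := by
    rw [hrdef, show (1:ℝ) = Real.sqrt 1 by simp]
    exact Real.sqrt_lt_sqrt (Real.sqrt_nonneg q) hsq1
  have hq4 : q = r ^ 4 := by
    rw [hrdef, show (Real.sqrt (Real.sqrt q)) ^ 4 = (Real.sqrt (Real.sqrt q) ^ 2) ^ 2 by ring,
      Real.sq_sqrt (Real.sqrt_nonneg q), Real.sq_sqrt hq0]
  set C0 : ℝ := (2 / (1 - r)) ^ d with hC0def
  have h1r : (0:ℝ) < 1 - r := by linarith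
  have hC0pos : (0:ℝ) < C0 := by rw [hC0def]; exact pow_pos (div_pos two_pos h1r) d
  refine ⟨ENNReal.ofReal (C0 * 3 ^ d / (1 - r)), ENNReal.ofReal_ne_top, ?_⟩
  intro a b hab Λ atom An θ hbox hRect hPart hFil hMono hAn hmono hadd B hBmeas hBsub K hK t ht
  have hRect' : ∀ n i, ∃ lo hi : Fin d → ℝ, i ∈ Λ n →
      ((∀ ℓ, lo ℓ < hi ℓ) ∧ atom n i = {x | ∀ ℓ, lo ℓ < x ℓ ∧ x ℓ ≤ hi ℓ}) := by
    intro n i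
    by_cases h : i ∈ Λ n
    · obtain ⟨lo, hi, h1, h2⟩ := hRect n i h
      exact ⟨lo, hi, fun _ => ⟨h1, h2⟩⟩
    · exact ⟨0, 0, fun h' => absurd h' h⟩
  choose LOf HIf hLH using hRect'
  set F : IF d := ⟨a, b, hab, Λ, atom, hbox, LOf, HIf, fun n i h => hLH n i h,
    fun n => (hPart n).1, fun n => (hPart n).2, hFil, hMono⟩ with hF
  -- Step 1: covering by leader hulls
  have hcover : B ∩ {x | ENNReal.ofReal t < maxFn q θ Λ atom An K x} ⊆
      ⋃ ν : Fin d → ℤ,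
        ⋃ p : {p : ℕ × (Fin d → ℤ) // Leader F θ q r C0 t B K ν p},
          rectHull (F.atom p.1.1 (p.1.2 + ν) ∪ F.atom p.1.1 p.1.2) := by
    rintro x ⟨hxB, hxM⟩
    simp only [Set.mem_setOf_eq, maxFn, lt_iSup_iff] at hxM
    obtain ⟨n, hKn, hsum⟩ := hxM
    have hxcube := hBsub hxB
    obtain ⟨hAn1, hAn2⟩ := hAn n x hxcube
    have hsum' : ENNReal.ofReal t < ∑ i ∈ F.Λ n,
        ENNReal.ofReal q ^ dist1 i (An n x) * θ (F.atom n i) /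
          volume (rectHull (F.atom n i ∪ F.atom n (An n x))) := by
      exact hsum
    obtain ⟨ν, hmem⟩ :=
      exists_member F θ q r C0 t B K hr0 hr1 ht hC0def hKn hxB hAn1 hAn2 hsum'
    obtain ⟨p, hlead, hsub, hple⟩ := exists_leader F θ q r C0 t B K hmem
    refine Set.mem_iUnion.2 ⟨ν, Set.mem_iUnion.2 ⟨⟨p, hlead⟩, ?_⟩⟩
    exact leader_cover F θ q r C0 t B K hmem hlead.1 hsub hple hAn2
  -- Step 2: per-shift volume bound
  have hνbound : ∀ ν : Fin d → ℤ,
      volume (⋃ p : {p : ℕ × (Fin d → ℤ) // Leader F θ q r C0 t B K ν p},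
        rectHull (F.atom p.1.1 (p.1.2 + ν) ∪ F.atom p.1.1 p.1.2)) ≤
      ENNReal.ofReal (C0 * r ^ (3 * dist1 ν 0) / t) *
        θ (nbhdUnion Λ atom K (dist1 ν 0) B) := by
    intro ν
    apply le_trans (measure_iUnion_le _)
    calc ∑' p : {p : ℕ × (Fin d → ℤ) // Leader F θ q r C0 t B K ν p},
          volume (rectHull (F.atom p.1.1 (p.1.2 + ν) ∪ F.atom p.1.1 p.1.2))
        ≤ ∑' p : {p : ℕ × (Fin d → ℤ) // Leader F θ q r C0 t B K ν p},
          ENNReal.ofReal (C0 * r ^ (3 * dist1 ν 0) / t) * θ (F.atom p.1.1 (p.1.2 + ν)) := by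
          apply ENNReal.tsum_le_tsum
          intro p
          exact member_vol_bound F θ q r C0 t B K hr0 hq0 hq4 ht (le_of_lt hC0pos) p.2.1
      _ = ENNReal.ofReal (C0 * r ^ (3 * dist1 ν 0) / t) *
          ∑' p : {p : ℕ × (Fin d → ℤ) // Leader F θ q r C0 t B K ν p},
            θ (F.atom p.1.1 (p.1.2 + ν)) := ENNReal.tsum_mul_left
      _ ≤ ENNReal.ofReal (C0 * r ^ (3 * dist1 ν 0) / t) *
          θ (nbhdUnion Λ atom K (dist1 ν 0) B) := by
          apply mul_le_mul_right
          apply theta_tsum_le θ hmono hadd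
          · intro p p' hne
            exact leaders_disjoint F θ q r C0 t B K p.2 p'.2
              (fun h => hne (Subtype.ext h))
          · intro p
            exact target_subset_nbhd F θ q r C0 t B K p.2.1
  -- Step 3: assemble
  calc volume (B ∩ {x | ENNReal.ofReal t < maxFn q θ Λ atom An K x})
      ≤ volume (⋃ ν : Fin d → ℤ,
          ⋃ p : {p : ℕ × (Fin d → ℤ) // Leader F θ q r C0 t B K ν p},
            rectHull (F.atom p.1.1 (p.1.2 + ν) ∪ F.atom p.1.1 p.1.2)) :=
        measure_mono hcover
    _ ≤ ∑' s : ℕ, ((2*s+1)^d : ℕ) *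
          (ENNReal.ofReal (C0 * r ^ (3 * s) / t) * θ (nbhdUnion Λ atom K s B)) :=
        regroup _ _ hνbound
    _ ≤ ∑' s : ℕ, ENNReal.ofReal (C0 * 3 ^ d / (1 - r)) / ENNReal.ofReal t *
          (ENNReal.ofReal (Real.sqrt q ^ s * (s + 1 : ℝ) ^ (d - 1)) *
            θ (nbhdUnion Λ atom K s B)) := by
        apply ENNReal.tsum_le_tsum
        intro s
        rw [← mul_assoc, ← mul_assoc]
        exact mul_le_mul_left (final_numeric hd hr0 hr1 ht hq4 hC0def s) _
    _ = ENNReal.ofReal (C0 * 3 ^ d / (1 - r)) / ENNReal.ofReal t *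
          ∑' s : ℕ, ENNReal.ofReal (Real.sqrt q ^ s * (s + 1 : ℝ) ^ (d - 1)) *
            θ (nbhdUnion Λ atom K s B) := ENNReal.tsum_mul_left
end

section
/- Let (ℱ_n) be an interval filtration on I^d and f ∈ L¹(I^d). Define the intrinsic maximal function M f(x) = sup_{n ≥ 1} ∑_{A atom of ℱ_n} q^{d_n(A,A_n(x))} (∫_A |f| dλ^d) / |conv(A ∪ A_n(x))| for a fixed q ∈ [0,1). Then M is of weak type (1,1): |{M f > t}| ≤ (C/t) ‖f‖_{L¹} for all t > 0, where C depends only on d and q. -/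
open MeasureTheory
open scoped ENNReal

/-- The intrinsic maximal function
`M f (x) = sup_{n ≥ 1} ∑_{A atom of ℱ_n} q^{d_n(A,A_n(x))} (∫_A |f|) / |conv(A ∪ A_n(x))|`. -/
noncomputable def intrinsicMaxFn {d : ℕ} (q : ℝ)
    (Λ : ℕ → Finset (Fin d → ℤ)) (atom : ℕ → (Fin d → ℤ) → Set (Fin d → ℝ))
    (An : ℕ → (Fin d → ℝ) → Fin d → ℤ) (f : (Fin d → ℝ) → ℝ) (x : Fin d → ℝ) : ℝ≥0∞ :=
  ⨆ n, ⨆ (_ : 1 ≤ n), ∑ i ∈ Λ n,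
    ENNReal.ofReal q ^ dist1 i (An n x) * (∫⁻ y in atom n i, ‖f y‖₊) /
      volume (rectHull (atom n i ∪ atom n (An n x)))

namespace IMFAux

variable {ι X : Type*}

open Classical in
/-- Greedy selection: keep `j` unless its `A`-set is already covered. -/
noncomputable def go (A H : ι → Set X) : Set X → List ι → List ι
  | _, [] => []
  | prev, j :: rest =>
    if A j ⊆ prev then go A H prev rest else j :: go A H (prev ∪ H j) rest

lemma go_subset {A H : ι → Set X} :
    ∀ {l : List ι} {prev : Set X} {k : ι}, k ∈ go A H prev l → k ∈ l := by
  intro l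
  induction l with
  | nil => intro prev k h; simp [go] at h
  | cons j rest ih =>
    intro prev k h
    rw [go] at h
    split_ifs at h with hcov
    · exact List.mem_cons_of_mem _ (ih h)
    · rcases List.mem_cons.1 h with h | h
      · exact h ▸ List.mem_cons_self
      · exact List.mem_cons_of_mem _ (ih h)

lemma go_cover {A H : ι → Set X} :
    ∀ {l : List ι} {prev : Set X}, (∀ j ∈ l, A j ⊆ H j) →
      ∀ {j}, j ∈ l → A j ⊆ prev ∪ ⋃ k ∈ go A H prev l, H k := by
  intro l
  induction l with
  | nil => intro prev _ j h; simp at h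
  | cons j0 rest ih =>
    intro prev hAH j hj
    rw [go]
    split_ifs with hcov
    · rcases List.mem_cons.1 hj with rfl | hj
      · exact hcov.trans (Set.subset_union_left)
      · exact ih (fun k hk => hAH k (List.mem_cons_of_mem _ hk)) hj
    · rcases List.mem_cons.1 hj with rfl | hj
      · refine (hAH j (List.mem_cons_self)).trans ?_
        intro x hx
        exact Set.mem_union_right _ (Set.mem_biUnion (List.mem_cons_self) hx)
      · have := ih (fun k hk => hAH k (List.mem_cons_of_mem _ hk)) hj (prev := prev ∪ H j0)
        refine this.trans ?_
        intro x hx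
        rcases hx with hx | hx
        · rcases hx with hx | hx
          · exact Or.inl hx
          · exact Or.inr (Set.mem_biUnion (List.mem_cons_self) hx)
        · rcases Set.mem_iUnion₂.1 hx with ⟨k, hk, hxk⟩
          exact Or.inr (Set.mem_biUnion (List.mem_cons_of_mem _ hk) hxk)

lemma go_witness {A H : ι → Set X} :
    ∀ {l : List ι} {prev : Set X} {k : ι}, k ∈ go A H prev l → ∃ p ∈ A k, p ∉ prev := by
  intro l
  induction l with
  | nil => intro prev k h; simp [go] at h
  | cons j rest ih =>
    intro prev k h
    rw [go] at h
    split_ifs at h with hcov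
    · exact ih h
    · rcases List.mem_cons.1 h with rfl | h
      · rcases Set.not_subset.1 hcov with ⟨p, hp, hp2⟩; exact ⟨p, hp, hp2⟩
      · rcases ih h with ⟨p, hp, hp2⟩
        exact ⟨p, hp, fun hc => hp2 (Or.inl hc)⟩

lemma go_pairwise {A H : ι → Set X} :
    ∀ {l : List ι} {prev : Set X},
      List.Pairwise (fun k k' => ∃ p ∈ A k', p ∉ H k) (go A H prev l) := by
  intro l
  induction l with
  | nil => intro prev; simp [go]
  | cons j rest ih =>
    intro prev
    rw [go]
    split_ifs with hcov
    · exact ih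
    · refine List.Pairwise.cons ?_ ih
      intro k hk
      rcases go_witness hk with ⟨p, hp, hp2⟩
      exact ⟨p, hp, fun hc => hp2 (Or.inr hc)⟩

/-- helper: from a pairwise list, distinct members are related one way or the other. -/
lemma pairwise_two {R : ι → ι → Prop} :
    ∀ {l : List ι}, List.Pairwise R l → ∀ {x y : ι}, x ∈ l → y ∈ l → x ≠ y → R x y ∨ R y x := by
  intro l
  induction l with
  | nil => intro _ x y hx; simp at hx
  | cons j rest ih =>
    intro h x y hx hy hxy
    rcases List.pairwise_cons.1 h with ⟨hj, hrest⟩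
    rcases List.mem_cons.1 hx with hx' | hx'
    · rcases List.mem_cons.1 hy with hy' | hy'
      · exact absurd (hx'.trans hy'.symm) hxy
      · exact Or.inl (hx' ▸ hj y hy')
    · rcases List.mem_cons.1 hy with hy' | hy'
      · exact Or.inr (hy' ▸ hj x hx')
      · exact ih hrest hx' hy' hxy

/-- Per-level accumulated union of selected hulls (union over levels `< n`). -/
noncomputable def USel (A H : ℕ → ι → Set X) (P : ℕ → List ι) : ℕ → Set X
  | 0 => ∅
  | n + 1 => USel A H P n ∪ ⋃ k ∈ go (A n) (H n) (USel A H P n) (P n), H n k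

/-- The selected indices at level `n`. -/
noncomputable def LSel (A H : ℕ → ι → Set X) (P : ℕ → List ι) (n : ℕ) : List ι :=
  go (A n) (H n) (USel A H P n) (P n)

lemma hull_sub_USel {A H : ℕ → ι → Set X} {P : ℕ → List ι} {m n : ℕ} (hmn : m < n)
    {k : ι} (hk : k ∈ LSel A H P m) : H m k ⊆ USel A H P n := by
  induction n with
  | zero => omega
  | succ n ih =>
    rcases Nat.lt_succ_iff_lt_or_eq.1 hmn with h | rfl
    · exact (ih h).trans Set.subset_union_left
    · exact (Set.subset_biUnion_of_mem (u := fun k => H m k) hk).trans Set.subset_union_right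

lemma USel_sub {A H : ℕ → ι → Set X} {P : ℕ → List ι} (n : ℕ) :
    USel A H P n ⊆ ⋃ m, ⋃ k ∈ LSel A H P m, H m k := by
  induction n with
  | zero => simp [USel]
  | succ n ih =>
    refine Set.union_subset ih ?_
    exact (Set.subset_iUnion (fun m => ⋃ k ∈ LSel A H P m, H m k) n)

lemma cover_total {A H : ℕ → ι → Set X} {P : ℕ → List ι}
    (hAH : ∀ n, ∀ j ∈ P n, A n j ⊆ H n j) :
    ∀ n, ∀ j ∈ P n, A n j ⊆ ⋃ m, ⋃ k ∈ LSel A H P m, H m k := by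
  intro n j hj
  have := go_cover (prev := USel A H P n) (hAH n) hj
  refine this.trans (Set.union_subset (USel_sub n) ?_)
  exact Set.subset_iUnion (fun m => ⋃ k ∈ LSel A H P m, H m k) n

lemma LSel_mem {A H : ℕ → ι → Set X} {P : ℕ → List ι} {n : ℕ} {k : ι}
    (h : k ∈ LSel A H P n) : k ∈ P n := go_subset h

lemma LSel_witness {A H : ℕ → ι → Set X} {P : ℕ → List ι} {n : ℕ} {k : ι}
    (h : k ∈ LSel A H P n) : ∃ p ∈ A n k, p ∉ USel A H P n := go_witness h

lemma LSel_pairwise {A H : ℕ → ι → Set X} {P : ℕ → List ι} {n : ℕ} :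
    List.Pairwise (fun k k' => ∃ p ∈ A n k', p ∉ H n k) (LSel A H P n) := go_pairwise




/-- `ℕ ⊕ ℕ ≃ ℤ` via `ofNat` and `negSucc`. -/
def sumEquivInt : ℕ ⊕ ℕ ≃ ℤ where
  toFun := Sum.elim Int.ofNat Int.negSucc
  invFun := fun k => match k with
    | Int.ofNat n => Sum.inl n
    | Int.negSucc n => Sum.inr n
  left_inv := by rintro (n | n) <;> rfl
  right_inv := by rintro (n | n) <;> rfl

lemma tsum_int_le (G : ℕ → ℝ≥0∞) : ∑' k : ℤ, G k.natAbs ≤ 2 * ∑' m : ℕ, G m := by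
  rw [tsum_of_nat_of_neg_add_one ENNReal.summable ENNReal.summable]
  have h1 : ∑' n : ℕ, G ((n : ℤ)).natAbs = ∑' n : ℕ, G n := by simp
  have h2 : ∑' n : ℕ, G ((-((n : ℤ) + 1)).natAbs) ≤ ∑' n : ℕ, G n := by
    have hna : ∀ n : ℕ, (-((n : ℤ) + 1)).natAbs = n + 1 := by
      intro n; omega
    calc ∑' n : ℕ, G ((-((n : ℤ) + 1)).natAbs) = ∑' n : ℕ, G (n + 1) := by
          exact tsum_congr fun n => by rw [hna]
      _ ≤ ∑' n : ℕ, G n :=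
          ENNReal.summable.tsum_le_tsum_of_inj (fun n => n + 1) (fun a b h => by simpa using h)
            (fun c _ => zero_le) (fun n => le_rfl) ENNReal.summable
  rw [h1, two_mul]
  exact add_le_add (le_refl _) h2

lemma tsum_pi_prod {d : ℕ} (g : ℤ → ℝ≥0∞) :
    ∑' v : Fin d → ℤ, ∏ ℓ, g (v ℓ) = (∑' k : ℤ, g k) ^ d := by
  induction d with
  | zero =>
    rw [pow_zero]
    have : ∀ v : Fin 0 → ℤ, (∏ ℓ, g (v ℓ)) = 1 := fun v => by simp
    rw [tsum_congr this, tsum_eq_single (fun i => i.elim0)]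
    · intro b hb
      exact absurd (funext fun i => i.elim0) hb
  | succ n ih =>
    rw [← ((Fin.consEquiv (fun _ : Fin (n+1) => ℤ)).tsum_eq (fun v => ∏ ℓ, g (v ℓ)) : _)]
    rw [ENNReal.tsum_prod']
    have hterm : ∀ (k : ℤ) (w : Fin n → ℤ),
        (∏ ℓ, g ((Fin.consEquiv (fun _ : Fin (n+1) => ℤ)) (k, w) ℓ)) = g k * ∏ ℓ, g (w ℓ) := by
      intro k w
      rw [Fin.prod_univ_succ]
      apply congrArg₂
      · simp [Fin.consEquiv]
      · apply Finset.prod_congr rfl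
        intro i _
        simp [Fin.consEquiv]
    calc ∑' (k : ℤ) (w : Fin n → ℤ), (∏ ℓ, g ((Fin.consEquiv (fun _ : Fin (n+1) => ℤ)) (k, w) ℓ))
        = ∑' (k : ℤ) (w : Fin n → ℤ), g k * ∏ ℓ, g (w ℓ) :=
          tsum_congr fun k => tsum_congr fun w => hterm k w
      _ = ∑' (k : ℤ), g k * ∑' w : Fin n → ℤ, ∏ ℓ, g (w ℓ) :=
          tsum_congr fun k => ENNReal.tsum_mul_left
      _ = (∑' k : ℤ, g k) * (∑' k : ℤ, g k) ^ n := by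
          rw [ENNReal.tsum_mul_right, ih]
      _ = (∑' k : ℤ, g k) ^ (n + 1) := by ring

lemma poly_geom_summable (ρ : ℝ) (h0 : 0 ≤ ρ) (h1 : ρ < 1) :
    Summable (fun m : ℕ => ((m : ℝ) + 3) ^ 2 * ρ ^ m) := by
  have hn : ‖ρ‖ < 1 := by rwa [Real.norm_eq_abs, abs_of_nonneg h0]
  have s2 := summable_pow_mul_geometric_of_norm_lt_one 2 hn
  have s1 := summable_pow_mul_geometric_of_norm_lt_one 1 hn
  have s0 := summable_pow_mul_geometric_of_norm_lt_one 0 hn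
  have := ((s2.add ((s1.mul_left 6))).add (s0.mul_left 9))
  refine this.congr ?_
  intro m
  simp only [pow_one, pow_zero, one_mul]
  ring

lemma poly_geom_ne_top (ρ : ℝ) (h0 : 0 ≤ ρ) (h1 : ρ < 1) :
    ∑' m : ℕ, (((m : ℕ) + 3 : ℕ) ^ 2 : ℝ≥0∞) * (ENNReal.ofReal ρ) ^ m ≠ ∞ := by
  have heq : ∀ m : ℕ, (((m : ℕ) + 3 : ℕ) ^ 2 : ℝ≥0∞) * (ENNReal.ofReal ρ) ^ m
      = ENNReal.ofReal (((m : ℝ) + 3) ^ 2 * ρ ^ m) := by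
    intro m
    rw [ENNReal.ofReal_mul (by positivity), ← ENNReal.ofReal_pow h0]
    congr 1
    rw [← ENNReal.ofReal_natCast (m+3), ← ENNReal.ofReal_pow (by positivity)]
    congr 1
    push_cast
    ring
  rw [tsum_congr heq, ← ENNReal.ofReal_tsum_of_nonneg (fun m => by positivity)
    (poly_geom_summable ρ h0 h1)]
  exact ENNReal.ofReal_ne_top

lemma geom_ne_top (ρ : ℝ) (h0 : 0 ≤ ρ) (h1 : ρ < 1) :
    ∑' m : ℕ, (ENNReal.ofReal ρ) ^ m ≠ ∞ := by
  rw [ENNReal.tsum_geometric]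
  simp only [ne_eq, ENNReal.inv_eq_top, tsub_eq_zero_iff_le, not_le]
  exact ENNReal.ofReal_lt_one.2 h1



structure GridData (d : ℕ) (a b : ℝ) where
  Λ : ℕ → Finset (Fin d → ℤ)
  atomf : ℕ → (Fin d → ℤ) → Set (Fin d → ℝ)
  lo : ℕ → (Fin d → ℤ) → Fin d → ℝ
  hi : ℕ → (Fin d → ℤ) → Fin d → ℝ
  hlh : ∀ n i, i ∈ Λ n → ∀ ℓ, lo n i ℓ < hi n i ℓ
  hatom : ∀ n i, i ∈ Λ n → atomf n i = {x | ∀ ℓ, lo n i ℓ < x ℓ ∧ x ℓ ≤ hi n i ℓ}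
  hdisj : ∀ n, ((Λ n : Set (Fin d → ℤ)).PairwiseDisjoint (atomf n))
  hcover : ∀ n, (⋃ i ∈ Λ n, atomf n i) = Set.univ.pi fun _ : Fin d => Set.Ioc a b
  hfilt : ∀ n, ∀ i ∈ Λ (n + 1), ∃ j ∈ Λ n, atomf (n + 1) i ⊆ atomf n j
  hmono : ∀ n, ∀ i ∈ Λ n, ∀ j ∈ Λ n, ∀ ℓ : Fin d, i ℓ < j ℓ →
        ∀ x ∈ atomf n i, ∀ y ∈ atomf n j, x ℓ ≤ y ℓ

namespace GridData

variable {d : ℕ} {a b : ℝ} (G : GridData d a b)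

lemma mem_atom {n : ℕ} {i : Fin d → ℤ} {x : Fin d → ℝ} (h : i ∈ G.Λ n) :
    x ∈ G.atomf n i ↔ ∀ ℓ, G.lo n i ℓ < x ℓ ∧ x ℓ ≤ G.hi n i ℓ := by
  rw [G.hatom n i h]; rfl

lemma top_mem {n : ℕ} {i : Fin d → ℤ} (h : i ∈ G.Λ n) : G.hi n i ∈ G.atomf n i :=
  (G.mem_atom h).2 fun ℓ => ⟨G.hlh n i h ℓ, le_rfl⟩

lemma update_mem {n : ℕ} {i : Fin d → ℤ} {x : Fin d → ℝ} (h : i ∈ G.Λ n)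
    (hx : x ∈ G.atomf n i) {ℓ : Fin d} {τ : ℝ}
    (h1 : G.lo n i ℓ < τ) (h2 : τ ≤ G.hi n i ℓ) : Function.update x ℓ τ ∈ G.atomf n i := by
  rw [G.mem_atom h] at hx ⊢
  intro m
  rcases eq_or_ne m ℓ with rfl | hm
  · simpa using ⟨h1, h2⟩
  · rw [Function.update_of_ne hm]; exact hx m

/-- midpoint of an atom. -/
noncomputable def mid (n : ℕ) (i : Fin d → ℤ) : Fin d → ℝ := fun ℓ => (G.lo n i ℓ + G.hi n i ℓ) / 2

lemma mid_mem {n : ℕ} {i : Fin d → ℤ} (h : i ∈ G.Λ n) : G.mid n i ∈ G.atomf n i := by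
  rw [G.mem_atom h]
  intro ℓ
  have := G.hlh n i h ℓ
  constructor
  · show G.lo n i ℓ < (G.lo n i ℓ + G.hi n i ℓ) / 2; linarith
  · show (G.lo n i ℓ + G.hi n i ℓ) / 2 ≤ G.hi n i ℓ; linarith

lemma lo_lt_mid {n : ℕ} {i : Fin d → ℤ} (h : i ∈ G.Λ n) (ℓ : Fin d) :
    G.lo n i ℓ < G.mid n i ℓ := by
  have := G.hlh n i h ℓ; show G.lo n i ℓ < (G.lo n i ℓ + G.hi n i ℓ) / 2; linarith

lemma mid_lt_hi {n : ℕ} {i : Fin d → ℤ} (h : i ∈ G.Λ n) (ℓ : Fin d) :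
    G.mid n i ℓ < G.hi n i ℓ := by
  have := G.hlh n i h ℓ; show (G.lo n i ℓ + G.hi n i ℓ) / 2 < G.hi n i ℓ; linarith

lemma atom_subset_cube {n : ℕ} {i : Fin d → ℤ} (h : i ∈ G.Λ n) :
    G.atomf n i ⊆ Set.univ.pi fun _ : Fin d => Set.Ioc a b := by
  rw [← G.hcover n]
  exact Set.subset_biUnion_of_mem h

lemma exists_atom {n : ℕ} {x : Fin d → ℝ} (hx : x ∈ Set.univ.pi fun _ : Fin d => Set.Ioc a b) :
    ∃ i ∈ G.Λ n, x ∈ G.atomf n i := by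
  rw [← G.hcover n] at hx
  simpa using hx

lemma atom_unique {n : ℕ} {i j : Fin d → ℤ} {x : Fin d → ℝ} (hi' : i ∈ G.Λ n) (hj : j ∈ G.Λ n)
    (hxi : x ∈ G.atomf n i) (hxj : x ∈ G.atomf n j) : i = j := by
  by_contra hne
  exact Set.disjoint_left.1 (G.hdisj n hi' hj hne) hxi hxj

lemma coord_mem_Ioc {n : ℕ} {i : Fin d → ℤ} (h : i ∈ G.Λ n) {x : Fin d → ℝ}
    (hx : x ∈ G.atomf n i) (ℓ : Fin d) : x ℓ ∈ Set.Ioc a b := by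
  have := G.atom_subset_cube h hx
  exact this ℓ (Set.mem_univ ℓ)

lemma hi_mem_Ioc {n : ℕ} {i : Fin d → ℤ} (h : i ∈ G.Λ n) (ℓ : Fin d) :
    G.hi n i ℓ ∈ Set.Ioc a b := G.coord_mem_Ioc h (G.top_mem h) ℓ

lemma le_lo {n : ℕ} {i : Fin d → ℤ} (h : i ∈ G.Λ n) (ℓ : Fin d) : a ≤ G.lo n i ℓ := by
  by_contra hlt
  push_neg at hlt
  have hhi := G.hi_mem_Ioc h ℓ
  set τ := min a (G.hi n i ℓ) with hτ
  have h1 : G.lo n i ℓ < τ := lt_min hlt (G.hlh n i h ℓ)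
  have h2 : τ ≤ G.hi n i ℓ := min_le_right _ _
  have hz := G.update_mem h (G.top_mem h) h1 h2
  have := G.coord_mem_Ioc h hz ℓ
  rw [Function.update_self] at this
  exact absurd this.1 (by simp [hτ])

/-- Monotone separation: smaller index column lies weakly below. -/
lemma hi_le_lo {n : ℕ} {i j : Fin d → ℤ} (hi' : i ∈ G.Λ n) (hj : j ∈ G.Λ n) {ℓ : Fin d}
    (hij : i ℓ < j ℓ) : G.hi n i ℓ ≤ G.lo n j ℓ := by
  by_contra hlt
  push_neg at hlt
  set τ := (G.lo n j ℓ + min (G.hi n i ℓ) (G.hi n j ℓ)) / 2 with hτ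
  have h1 : G.lo n j ℓ < τ := by
    have : G.lo n j ℓ < min (G.hi n i ℓ) (G.hi n j ℓ) := lt_min hlt (G.hlh n j hj ℓ)
    rw [hτ]; linarith
  have h2 : τ < G.hi n i ℓ := by
    have hm : min (G.hi n i ℓ) (G.hi n j ℓ) ≤ G.hi n i ℓ := min_le_left _ _
    rw [hτ]; nlinarith [lt_min hlt (G.hlh n j hj ℓ)]
  have h3 : τ ≤ G.hi n j ℓ := by
    have hm : min (G.hi n i ℓ) (G.hi n j ℓ) ≤ G.hi n j ℓ := min_le_right _ _
    have : G.lo n j ℓ < min (G.hi n i ℓ) (G.hi n j ℓ) := lt_min hlt (G.hlh n j hj ℓ)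
    rw [hτ]; linarith
  have hp := G.update_mem hj (G.top_mem hj) h1 h3
  have := G.hmono n i hi' j hj ℓ hij (G.hi n i) (G.top_mem hi') _ hp
  rw [Function.update_self] at this
  exact absurd this (not_le.2 h2)

/-- Grid property for upper faces. -/
lemma GP_hi {n : ℕ} {i j : Fin d → ℤ} (hi' : i ∈ G.Λ n) (hj : j ∈ G.Λ n) {ℓ : Fin d}
    (hij : i ℓ = j ℓ) : G.hi n i ℓ = G.hi n j ℓ := by
  have key : ∀ i j : Fin d → ℤ, i ∈ G.Λ n → j ∈ G.Λ n → i ℓ = j ℓ →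
      ¬ (G.hi n i ℓ < G.hi n j ℓ) := by
    intro i j hi' hj hij hlt
    set z := Function.update (G.mid n i) ℓ (G.hi n j ℓ) with hzdef
    have hzc : z ∈ Set.univ.pi fun _ : Fin d => Set.Ioc a b := by
      intro m _
      rcases eq_or_ne m ℓ with rfl | hm
      · rw [hzdef, Function.update_self]; exact G.hi_mem_Ioc hj m
      · rw [hzdef, Function.update_of_ne hm]
        exact G.coord_mem_Ioc hi' (G.mid_mem hi') m
    obtain ⟨w, hw, hzw⟩ := G.exists_atom (n := n) hzc
    have hzℓ : z ℓ = G.hi n j ℓ := by rw [hzdef, Function.update_self]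
    have step1 : ∀ m, m ≠ ℓ → w m = i m := by
      intro m hm
      have hzm : z m = G.mid n i m := by rw [hzdef, Function.update_of_ne hm]
      rcases lt_trichotomy (w m) (i m) with h | h | h
      · -- z m ≤ every point of atom i with m-coord below mid: contradiction
        have hy : Function.update (G.mid n i) m ((G.lo n i m + G.mid n i m)/2) ∈ G.atomf n i := by
          refine G.update_mem hi' (G.mid_mem hi') ?_ ?_
          · have := G.lo_lt_mid hi' m; linarith
          · have := G.lo_lt_mid hi' m; have := G.mid_lt_hi hi' m; linarith
        have h2 := G.hmono n w hw i hi' m h z hzw _ hy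
        rw [Function.update_self] at h2
        have hlm := G.lo_lt_mid hi' m
        linarith
      · exact h
      · have hy : Function.update (G.mid n i) m ((G.mid n i m + G.hi n i m)/2) ∈ G.atomf n i := by
          refine G.update_mem hi' (G.mid_mem hi') ?_ ?_
          · have := G.lo_lt_mid hi' m; have := G.mid_lt_hi hi' m; linarith
          · have := G.mid_lt_hi hi' m; linarith
        have h2 := G.hmono n i hi' w hw m h _ hy z hzw
        rw [Function.update_self] at h2
        have hmh := G.mid_lt_hi hi' m
        linarith
    rcases lt_trichotomy (w ℓ) (j ℓ) with h | h | h
    · have h2 := G.hmono n w hw j hj ℓ h z hzw _ (G.mid_mem hj)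
      have h3 := G.mid_lt_hi hj ℓ
      linarith
    · have hwi : w = i := by
        funext m
        rcases eq_or_ne m ℓ with rfl | hm
        · rw [h, ← hij]
        · exact step1 m hm
      rw [hwi] at hzw
      have h2 := ((G.mem_atom hi').1 hzw ℓ).2
      linarith
    · -- w ℓ > j ℓ
      have hzl : G.lo n w ℓ < z ℓ := ((G.mem_atom hw).1 hzw ℓ).1
      have hx : Function.update (G.mid n w) ℓ ((G.lo n w ℓ + z ℓ)/2) ∈ G.atomf n w := by
        refine G.update_mem hw (G.mid_mem hw) ?_ ?_
        · linarith
        · have := ((G.mem_atom hw).1 hzw ℓ).2; linarith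
      have h2 := G.hmono n j hj w hw ℓ h (G.hi n j) (G.top_mem hj) _ hx
      rw [Function.update_self] at h2
      linarith
  rcases lt_trichotomy (G.hi n i ℓ) (G.hi n j ℓ) with h | h | h
  · exact absurd h (key i j hi' hj hij)
  · exact h
  · exact absurd h (key j i hj hi' hij.symm)

/-- Grid property for lower faces. -/
lemma GP_lo {n : ℕ} {i j : Fin d → ℤ} (hi' : i ∈ G.Λ n) (hj : j ∈ G.Λ n) {ℓ : Fin d}
    (hij : i ℓ = j ℓ) : G.lo n i ℓ = G.lo n j ℓ := by
  have key : ∀ i j : Fin d → ℤ, i ∈ G.Λ n → j ∈ G.Λ n → i ℓ = j ℓ →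
      ¬ (G.lo n i ℓ < G.lo n j ℓ) := by
    intro i j hi' hj hij hlt
    set τ := (G.lo n i ℓ + min (G.lo n j ℓ) (G.hi n i ℓ)) / 2 with hτ
    have hτ1 : G.lo n i ℓ < τ := by
      have : G.lo n i ℓ < min (G.lo n j ℓ) (G.hi n i ℓ) := lt_min hlt (G.hlh n i hi' ℓ)
      rw [hτ]; linarith
    have hτ2 : τ < G.lo n j ℓ := by
      have h1 : G.lo n i ℓ < min (G.lo n j ℓ) (G.hi n i ℓ) := lt_min hlt (G.hlh n i hi' ℓ)
      have h2 : min (G.lo n j ℓ) (G.hi n i ℓ) ≤ G.lo n j ℓ := min_le_left _ _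
      rw [hτ]; linarith
    have hτ3 : τ < G.hi n i ℓ := by
      have h1 : G.lo n i ℓ < min (G.lo n j ℓ) (G.hi n i ℓ) := lt_min hlt (G.hlh n i hi' ℓ)
      have h2 : min (G.lo n j ℓ) (G.hi n i ℓ) ≤ G.hi n i ℓ := min_le_right _ _
      rw [hτ]; linarith
    set z := Function.update (G.mid n j) ℓ τ with hzdef
    have hzℓ : z ℓ = τ := by rw [hzdef, Function.update_self]
    have hzc : z ∈ Set.univ.pi fun _ : Fin d => Set.Ioc a b := by
      intro m _
      rcases eq_or_ne m ℓ with rfl | hm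
      · rw [hzdef, Function.update_self]
        constructor
        · exact lt_of_le_of_lt (G.le_lo hi' m) hτ1
        · exact le_trans hτ3.le (G.hi_mem_Ioc hi' m).2
      · rw [hzdef, Function.update_of_ne hm]
        exact G.coord_mem_Ioc hj (G.mid_mem hj) m
    obtain ⟨w, hw, hzw⟩ := G.exists_atom (n := n) hzc
    have step1 : ∀ m, m ≠ ℓ → w m = j m := by
      intro m hm
      have hzm : z m = G.mid n j m := by rw [hzdef, Function.update_of_ne hm]
      rcases lt_trichotomy (w m) (j m) with h | h | h
      · have hy : Function.update (G.mid n j) m ((G.lo n j m + G.mid n j m)/2) ∈ G.atomf n j := by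
          refine G.update_mem hj (G.mid_mem hj) ?_ ?_
          · have := G.lo_lt_mid hj m; linarith
          · have := G.lo_lt_mid hj m; have := G.mid_lt_hi hj m; linarith
        have h2 := G.hmono n w hw j hj m h z hzw _ hy
        rw [Function.update_self] at h2
        have h3 := G.lo_lt_mid hj m
        linarith
      · exact h
      · have hy : Function.update (G.mid n j) m ((G.mid n j m + G.hi n j m)/2) ∈ G.atomf n j := by
          refine G.update_mem hj (G.mid_mem hj) ?_ ?_
          · have := G.lo_lt_mid hj m; have := G.mid_lt_hi hj m; linarith
          · have := G.mid_lt_hi hj m; linarith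
        have h2 := G.hmono n j hj w hw m h _ hy z hzw
        rw [Function.update_self] at h2
        have h3 := G.mid_lt_hi hj m
        linarith
    rcases lt_trichotomy (w ℓ) (i ℓ) with h | h | h
    · -- w below i: z ℓ ≤ points of atom i near lo: contradiction with τ > lo i
      have hy : Function.update (G.mid n i) ℓ ((G.lo n i ℓ + τ)/2) ∈ G.atomf n i := by
        refine G.update_mem hi' (G.mid_mem hi') ?_ ?_
        · linarith
        · linarith
      have h2 := G.hmono n w hw i hi' ℓ h z hzw _ hy
      rw [Function.update_self] at h2
      linarith
    · have hwj : w = j := by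
        funext m
        rcases eq_or_ne m ℓ with rfl | hm
        · rw [h, hij]
        · exact step1 m hm
      rw [hwj] at hzw
      have h2 := ((G.mem_atom hj).1 hzw ℓ).1
      linarith
    · -- w above i
      have h2 := G.hmono n i hi' w hw ℓ h (G.hi n i) (G.top_mem hi') z hzw
      linarith
  rcases lt_trichotomy (G.lo n i ℓ) (G.lo n j ℓ) with h | h | h
  · exact absurd h (key i j hi' hj hij)
  · exact h
  · exact absurd h (key j i hj hi' hij.symm)

lemma lo_le_lo {n : ℕ} {i j : Fin d → ℤ} (hi' : i ∈ G.Λ n) (hj : j ∈ G.Λ n) {ℓ : Fin d}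
    (hij : i ℓ ≤ j ℓ) : G.lo n i ℓ ≤ G.lo n j ℓ := by
  rcases lt_or_eq_of_le hij with h | h
  · exact le_trans (G.hlh n i hi' ℓ).le (G.hi_le_lo hi' hj h)
  · exact (G.GP_lo hi' hj h).le

lemma hi_le_hi {n : ℕ} {i j : Fin d → ℤ} (hi' : i ∈ G.Λ n) (hj : j ∈ G.Λ n) {ℓ : Fin d}
    (hij : i ℓ ≤ j ℓ) : G.hi n i ℓ ≤ G.hi n j ℓ := by
  rcases lt_or_eq_of_le hij with h | h
  · exact le_trans (G.hi_le_lo hi' hj h) (G.hlh n j hj ℓ).le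
  · exact (G.GP_hi hi' hj h).le

lemma anc {m n : ℕ} (hmn : m ≤ n) :
    ∀ i ∈ G.Λ n, ∃ j ∈ G.Λ m, G.atomf n i ⊆ G.atomf m j := by
  induction n, hmn using Nat.le_induction with
  | base => exact fun i hi' => ⟨i, hi', subset_rfl⟩
  | succ n hmn ih =>
    intro i hi'
    obtain ⟨k, hk, hsub⟩ := G.hfilt n i hi'
    obtain ⟨j, hj, hsub2⟩ := ih k hk
    exact ⟨j, hj, hsub.trans hsub2⟩

lemma refine_sub {m n : ℕ} (hmn : m ≤ n) {i' i : Fin d → ℤ} {x : Fin d → ℝ}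
    (hi' : i' ∈ G.Λ n) (hi : i ∈ G.Λ m) (hx1 : x ∈ G.atomf n i') (hx2 : x ∈ G.atomf m i) :
    G.atomf n i' ⊆ G.atomf m i := by
  obtain ⟨j, hj, hsub⟩ := G.anc hmn i' hi'
  have : j = i := G.atom_unique hj hi (hsub hx1) hx2
  exact this ▸ hsub

lemma bounds_of_subset {m n : ℕ} {i' i : Fin d → ℤ} (hi' : i' ∈ G.Λ n) (hi : i ∈ G.Λ m)
    (hsub : G.atomf n i' ⊆ G.atomf m i) (ℓ : Fin d) :
    G.lo m i ℓ ≤ G.lo n i' ℓ ∧ G.hi n i' ℓ ≤ G.hi m i ℓ := by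
  constructor
  · by_contra hlt
    push_neg at hlt
    set τ := (G.lo n i' ℓ + min (G.lo m i ℓ) (G.hi n i' ℓ)) / 2 with hτ
    have h1 : G.lo n i' ℓ < τ := by
      have : G.lo n i' ℓ < min (G.lo m i ℓ) (G.hi n i' ℓ) := lt_min hlt (G.hlh n i' hi' ℓ)
      rw [hτ]; linarith
    have h2 : τ ≤ G.hi n i' ℓ := by
      have h3 : G.lo n i' ℓ < min (G.lo m i ℓ) (G.hi n i' ℓ) := lt_min hlt (G.hlh n i' hi' ℓ)
      have h4 : min (G.lo m i ℓ) (G.hi n i' ℓ) ≤ G.hi n i' ℓ := min_le_right _ _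
      rw [hτ]; linarith
    have hz := G.update_mem hi' (G.top_mem hi') h1 h2
    have := ((G.mem_atom hi).1 (hsub hz) ℓ).1
    rw [Function.update_self] at this
    have : min (G.lo m i ℓ) (G.hi n i' ℓ) ≤ G.lo m i ℓ := min_le_left _ _
    have h3 : G.lo n i' ℓ < min (G.lo m i ℓ) (G.hi n i' ℓ) := lt_min hlt (G.hlh n i' hi' ℓ)
    have h5 := ((G.mem_atom hi).1 (hsub hz) ℓ).1
    rw [Function.update_self] at h5
    rw [hτ] at h5
    linarith
  · have := ((G.mem_atom hi).1 (hsub (G.top_mem hi')) ℓ).2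
    exact this

lemma persist_hi {m n : ℕ} (hmn : m ≤ n) {i : Fin d → ℤ} (hi : i ∈ G.Λ m) (ℓ : Fin d) :
    ∃ i' ∈ G.Λ n, G.hi n i' ℓ = G.hi m i ℓ := by
  obtain ⟨i', hi', hmem⟩ := G.exists_atom (n := n) (G.atom_subset_cube hi (G.top_mem hi))
  have hsub := G.refine_sub hmn hi' hi hmem (G.top_mem hi)
  refine ⟨i', hi', le_antisymm ((G.bounds_of_subset hi' hi hsub ℓ).2) ?_⟩
  exact ((G.mem_atom hi').1 hmem ℓ).2

lemma persist_lo {m n : ℕ} (hmn : m ≤ n) {i : Fin d → ℤ} (hi : i ∈ G.Λ m) (ℓ : Fin d) :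
    ∃ i' ∈ G.Λ n, G.lo n i' ℓ = G.lo m i ℓ := by
  set δ := G.hi m i ℓ - G.lo m i ℓ with hδ
  have hδ0 : 0 < δ := by rw [hδ]; have := G.hlh m i hi ℓ; linarith
  have hxp : ∀ p : ℕ, Function.update (G.hi m i) ℓ (G.lo m i ℓ + δ / (p + 1)) ∈ G.atomf m i := by
    intro p
    refine G.update_mem hi (G.top_mem hi) ?_ ?_
    · have : (0:ℝ) < δ / (p+1) := by positivity
      linarith
    · have h1 : δ / (p+1) ≤ δ := by
        rw [div_le_iff₀ (by positivity)]
        nlinarith [Nat.cast_nonneg (α := ℝ) p]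
      rw [hδ] at h1 ⊢
      linarith
  have hch : ∀ p : ℕ, ∃ i' ∈ G.Λ n, Function.update (G.hi m i) ℓ (G.lo m i ℓ + δ / (p + 1))
      ∈ G.atomf n i' := fun p => G.exists_atom (G.atom_subset_cube hi (hxp p))
  choose F hF1 hF2 using hch
  -- some fiber is infinite
  have hfin : ∃ i' ∈ G.Λ n, {p : ℕ | F p = i'}.Infinite := by
    by_contra hall
    push_neg at hall
    have : (Set.univ : Set ℕ) ⊆ ⋃ i' ∈ G.Λ n, {p : ℕ | F p = i'} := by
      intro p _
      exact Set.mem_biUnion (hF1 p) rfl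
    have hfin2 : (⋃ i' ∈ G.Λ n, {p : ℕ | F p = i'}).Finite := by
      refine Set.Finite.biUnion (G.Λ n).finite_toSet ?_
      intro i' hi'
      by_cases hmem : i' ∈ G.Λ n
      · exact hall i' hmem
      · exact absurd hi' hmem
    exact Set.infinite_univ (hfin2.subset this)
  obtain ⟨i', hi', hinf⟩ := hfin
  obtain ⟨p0, hp0⟩ := hinf.nonempty
  have hsub : G.atomf n i' ⊆ G.atomf m i := by
    refine G.refine_sub hmn hi' hi ?_ (hxp p0)
    rw [← hp0]; exact hF2 p0
  refine ⟨i', hi', le_antisymm ?_ ((G.bounds_of_subset hi' hi hsub ℓ).1)⟩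
  by_contra hlt
  push_neg at hlt
  set ε := G.lo n i' ℓ - G.lo m i ℓ with hε
  have hε0 : 0 < ε := by rw [hε]; linarith
  obtain ⟨N, hN⟩ := exists_nat_gt (δ / ε)
  obtain ⟨p, hp, hpN⟩ := hinf.exists_gt N
  have hmem : Function.update (G.hi m i) ℓ (G.lo m i ℓ + δ / (p + 1)) ∈ G.atomf n i' := by
    rw [← hp]; exact hF2 p
  have := ((G.mem_atom hi').1 hmem ℓ).1
  rw [Function.update_self] at this
  -- lo n i' ℓ < lo m i ℓ + δ/(p+1), i.e. ε < δ/(p+1)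
  have hlt2 : ε < δ / (p + 1) := by rw [hε]; linarith
  have hp1 : (N : ℝ) < (p : ℝ) + 1 := by
    have : (N : ℝ) < (p : ℝ) := by exact_mod_cast hpN
    linarith
  have : δ / ε < (p : ℝ) + 1 := lt_trans hN hp1
  have h2 : δ < ε * ((p:ℝ) + 1) := by
    rw [div_lt_iff₀ hε0] at this
    linarith
  have h3 : δ / ((p:ℝ)+1) < ε := by
    rw [div_lt_iff₀ (by positivity)]
    linarith
  linarith

/-! ### Hulls spanned by a pair of atoms at offset `v` -/

variable (v : Fin d → ℤ)

noncomputable def hLo (n : ℕ) (j : Fin d → ℤ) : Fin d → ℝ :=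
  fun ℓ => min (G.lo n j ℓ) (G.lo n (j + v) ℓ)

noncomputable def hHi (n : ℕ) (j : Fin d → ℤ) : Fin d → ℝ :=
  fun ℓ => max (G.hi n j ℓ) (G.hi n (j + v) ℓ)

def hull (n : ℕ) (j : Fin d → ℤ) : Set (Fin d → ℝ) :=
  Set.univ.pi fun ℓ => Set.Icc (G.hLo v n j ℓ) (G.hHi v n j ℓ)

variable {n : ℕ} {j : Fin d → ℤ}

lemma hLo_lt_hHi (hj : j ∈ G.Λ n) (ℓ : Fin d) : G.hLo v n j ℓ < G.hHi v n j ℓ :=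
  lt_of_le_of_lt (min_le_left _ _) (lt_of_lt_of_le (G.hlh n j hj ℓ) (le_max_left _ _))

lemma proj_atom (hj : j ∈ G.Λ n) (ℓ : Fin d) :
    (fun z : Fin d → ℝ => z ℓ) '' G.atomf n j = Set.Ioc (G.lo n j ℓ) (G.hi n j ℓ) := by
  apply Set.Subset.antisymm
  · rintro τ ⟨x, hx, rfl⟩
    exact ⟨((G.mem_atom hj).1 hx ℓ).1, ((G.mem_atom hj).1 hx ℓ).2⟩
  · intro τ hτ
    exact ⟨Function.update (G.hi n j) ℓ τ, G.update_mem hj (G.top_mem hj) hτ.1 hτ.2,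
      Function.update_self _ _ _⟩

lemma rectHull_eq (hj : j ∈ G.Λ n) (hjv : j + v ∈ G.Λ n) :
    rectHull (G.atomf n (j + v) ∪ G.atomf n j) = G.hull v n j := by
  have hInf : ∀ ℓ, sInf ((fun z : Fin d → ℝ => z ℓ) '' (G.atomf n (j+v) ∪ G.atomf n j))
      = G.hLo v n j ℓ := by
    intro ℓ
    rw [Set.image_union, G.proj_atom hjv ℓ, G.proj_atom hj ℓ]
    rw [csInf_union bddBelow_Ioc (Set.nonempty_Ioc.2 (G.hlh n (j+v) hjv ℓ))
      bddBelow_Ioc (Set.nonempty_Ioc.2 (G.hlh n j hj ℓ))]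
    rw [csInf_Ioc (G.hlh n (j+v) hjv ℓ), csInf_Ioc (G.hlh n j hj ℓ)]
    exact min_comm _ _
  have hSup : ∀ ℓ, sSup ((fun z : Fin d → ℝ => z ℓ) '' (G.atomf n (j+v) ∪ G.atomf n j))
      = G.hHi v n j ℓ := by
    intro ℓ
    rw [Set.image_union, G.proj_atom hjv ℓ, G.proj_atom hj ℓ]
    rw [csSup_union bddAbove_Ioc (Set.nonempty_Ioc.2 (G.hlh n (j+v) hjv ℓ))
      bddAbove_Ioc (Set.nonempty_Ioc.2 (G.hlh n j hj ℓ))]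
    rw [csSup_Ioc (G.hlh n (j+v) hjv ℓ), csSup_Ioc (G.hlh n j hj ℓ)]
    exact max_comm _ _
  ext x
  constructor
  · intro hx
    intro ℓ _
    exact ⟨(hInf ℓ) ▸ (hx ℓ).1, (hSup ℓ) ▸ (hx ℓ).2⟩
  · intro hx ℓ
    exact ⟨(hInf ℓ).symm ▸ (hx ℓ (Set.mem_univ ℓ)).1, (hSup ℓ).symm ▸ (hx ℓ (Set.mem_univ ℓ)).2⟩

lemma hull_measurable : MeasurableSet (G.hull v n j) :=
  MeasurableSet.univ_pi fun ℓ => measurableSet_Icc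

lemma volume_hull : volume (G.hull v n j)
    = ∏ ℓ, ENNReal.ofReal (G.hHi v n j ℓ - G.hLo v n j ℓ) := by
  rw [hull, volume_pi_pi]
  exact Finset.prod_congr rfl fun ℓ _ => Real.volume_Icc

lemma volume_hull_pos (hj : j ∈ G.Λ n) : 0 < volume (G.hull v n j) := by
  rw [G.volume_hull]
  refine CanonicallyOrderedAdd.prod_pos.2 fun ℓ _ => ?_
  exact ENNReal.ofReal_pos.2 (by linarith [G.hLo_lt_hHi v hj ℓ])

lemma volume_hull_ne_top : volume (G.hull v n j) ≠ ∞ := by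
  rw [G.volume_hull]
  exact (ENNReal.prod_lt_top fun ℓ _ => ENNReal.ofReal_lt_top).ne

lemma atom_sub_hull (hj : j ∈ G.Λ n) : G.atomf n j ⊆ G.hull v n j := by
  intro x hx ℓ _
  have h := (G.mem_atom hj).1 hx ℓ
  exact ⟨le_trans (min_le_left _ _) h.1.le, le_trans h.2 (le_max_left _ _)⟩

lemma atom_v_sub_hull (hjv : j + v ∈ G.Λ n) : G.atomf n (j + v) ⊆ G.hull v n j := by
  intro x hx ℓ _
  have h := (G.mem_atom hjv).1 hx ℓ
  exact ⟨le_trans (min_le_right _ _) h.1.le, le_trans h.2 (le_max_right _ _)⟩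

lemma mem_hull_iff {y : Fin d → ℝ} :
    y ∈ G.hull v n j ↔ ∀ ℓ, G.hLo v n j ℓ ≤ y ℓ ∧ y ℓ ≤ G.hHi v n j ℓ := by
  constructor
  · intro h ℓ; exact h ℓ (Set.mem_univ ℓ)
  · intro h ℓ _; exact h ℓ

lemma not_mem_hull {p : Fin d → ℝ} (h : p ∉ G.hull v n j) :
    ∃ ℓ, p ℓ < G.hLo v n j ℓ ∨ G.hHi v n j ℓ < p ℓ := by
  by_contra hc
  push_neg at hc
  exact h ((G.mem_hull_iff v).2 fun ℓ => ⟨(hc ℓ).1, (hc ℓ).2⟩)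

lemma exists_min_cell (hj : j ∈ G.Λ n) (hjv : j + v ∈ G.Λ n) (ℓ : Fin d) :
    ∃ c ∈ G.Λ n, c ℓ = min (j ℓ) (j ℓ + v ℓ) ∧ G.lo n c ℓ = G.hLo v n j ℓ := by
  rcases le_total (j ℓ) (j ℓ + v ℓ) with h | h
  · refine ⟨j, hj, (min_eq_left h).symm, ?_⟩
    have : G.lo n j ℓ ≤ G.lo n (j+v) ℓ := G.lo_le_lo hj hjv (by simpa using h)
    exact (min_eq_left this).symm
  · refine ⟨j + v, hjv, ?_, ?_⟩
    · rw [min_eq_right h]; simp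
    · have : G.lo n (j+v) ℓ ≤ G.lo n j ℓ := G.lo_le_lo hjv hj (by simpa using h)
      exact (min_eq_right this).symm

lemma exists_max_cell (hj : j ∈ G.Λ n) (hjv : j + v ∈ G.Λ n) (ℓ : Fin d) :
    ∃ c ∈ G.Λ n, c ℓ = max (j ℓ) (j ℓ + v ℓ) ∧ G.hi n c ℓ = G.hHi v n j ℓ := by
  rcases le_total (j ℓ) (j ℓ + v ℓ) with h | h
  · refine ⟨j + v, hjv, ?_, ?_⟩
    · rw [max_eq_right h]; simp
    · have : G.hi n j ℓ ≤ G.hi n (j+v) ℓ := G.hi_le_hi hj hjv (by simpa using h)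
      exact (max_eq_right this).symm
  · refine ⟨j, hj, (max_eq_left h).symm, ?_⟩
    have : G.hi n (j+v) ℓ ≤ G.hi n j ℓ := G.hi_le_hi hjv hj (by simpa using h)
    exact (max_eq_left this).symm

/-! ### Boundary counting -/

noncomputable def Dhi (n : ℕ) (ℓ : Fin d) : Finset ℝ := (G.Λ n).image fun i => G.hi n i ℓ

noncomputable def Dlo (n : ℕ) (ℓ : Fin d) : Finset ℝ := (G.Λ n).image fun i => G.lo n i ℓ

lemma Dhi_mono {m n' : ℕ} (hmn : m ≤ n') (ℓ : Fin d) : G.Dhi m ℓ ⊆ G.Dhi n' ℓ := by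
  intro c hc
  rw [Dhi, Finset.mem_image] at hc ⊢
  obtain ⟨i, hi', rfl⟩ := hc
  obtain ⟨i', hi'', heq⟩ := G.persist_hi hmn hi' ℓ
  exact ⟨i', hi'', heq⟩

lemma Dlo_mono {m n' : ℕ} (hmn : m ≤ n') (ℓ : Fin d) : G.Dlo m ℓ ⊆ G.Dlo n' ℓ := by
  intro c hc
  rw [Dlo, Finset.mem_image] at hc ⊢
  obtain ⟨i, hi', rfl⟩ := hc
  obtain ⟨i', hi'', heq⟩ := G.persist_lo hmn hi' ℓ
  exact ⟨i', hi'', heq⟩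

open Classical in
noncomputable def Rp (y : Fin d → ℝ) (n : ℕ) (j : Fin d → ℤ) (ℓ : Fin d) : ℕ :=
  ((G.Dhi n ℓ).filter fun c => y ℓ ≤ c ∧ c ≤ G.hHi v n j ℓ).card

open Classical in
noncomputable def Rm (y : Fin d → ℝ) (n : ℕ) (j : Fin d → ℤ) (ℓ : Fin d) : ℕ :=
  ((G.Dlo n ℓ).filter fun c => G.hLo v n j ℓ ≤ c ∧ c ≤ y ℓ).card

open Classical in
noncomputable def gHi (n : ℕ) (ℓ : Fin d) (k : ℤ) : ℝ :=
  if h : ∃ i, i ∈ G.Λ n ∧ i ℓ = k then G.hi n h.choose ℓ else 0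

open Classical in
noncomputable def gLo (n : ℕ) (ℓ : Fin d) (k : ℤ) : ℝ :=
  if h : ∃ i, i ∈ G.Λ n ∧ i ℓ = k then G.lo n h.choose ℓ else 0

lemma gHi_eq {i : Fin d → ℤ} (h : i ∈ G.Λ n) (ℓ : Fin d) : G.gHi n ℓ (i ℓ) = G.hi n i ℓ := by
  have hex : ∃ i', i' ∈ G.Λ n ∧ i' ℓ = i ℓ := ⟨i, h, rfl⟩
  rw [gHi, dif_pos hex]
  exact G.GP_hi hex.choose_spec.1 h hex.choose_spec.2

lemma gLo_eq {i : Fin d → ℤ} (h : i ∈ G.Λ n) (ℓ : Fin d) : G.gLo n ℓ (i ℓ) = G.lo n i ℓ := by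
  have hex : ∃ i', i' ∈ G.Λ n ∧ i' ℓ = i ℓ := ⟨i, h, rfl⟩
  rw [gLo, dif_pos hex]
  exact G.GP_lo hex.choose_spec.1 h hex.choose_spec.2

lemma card_Icc_int (m M : ℤ) (e : ℕ) (h : M - m = (e : ℤ)) : (Finset.Icc m M).card = e + 1 := by
  rw [Int.card_Icc]
  omega

lemma Rp_le (hj : j ∈ G.Λ n) (hjv : j + v ∈ G.Λ n) {y : Fin d → ℝ}
    (hy : y ∈ G.hull v n j) (ℓ : Fin d) : G.Rp v y n j ℓ ≤ (v ℓ).natAbs + 2 := by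
  classical
  set m := min (j ℓ) (j ℓ + v ℓ) with hm
  set M := max (j ℓ) (j ℓ + v ℓ) with hM
  obtain ⟨cm, hcm, hcmℓ, hcml⟩ := G.exists_min_cell v hj hjv ℓ
  obtain ⟨cM, hcM, hcMℓ, hcMh⟩ := G.exists_max_cell v hj hjv ℓ
  have hsub : ((G.Dhi n ℓ).filter fun c => y ℓ ≤ c ∧ c ≤ G.hHi v n j ℓ)
      ⊆ insert (G.hLo v n j ℓ) ((Finset.Icc m M).image (G.gHi n ℓ)) := by
    intro c hc
    rw [Finset.mem_filter, Dhi, Finset.mem_image] at hc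
    obtain ⟨⟨i, hiΛ, rfl⟩, hyc, hcβ⟩ := hc
    rcases lt_or_ge (i ℓ) m with h | h
    · have h1 : G.hi n i ℓ ≤ G.lo n cm ℓ := G.hi_le_lo hiΛ hcm (hcmℓ ▸ h)
      have h2 : G.hLo v n j ℓ ≤ y ℓ := ((G.mem_hull_iff v).1 hy ℓ).1
      have : G.hi n i ℓ = G.hLo v n j ℓ := le_antisymm (hcml ▸ h1) (le_trans h2 hyc)
      rw [this]
      exact Finset.mem_insert_self _ _
    · rcases le_or_gt (i ℓ) M with h2 | h2
      · refine Finset.mem_insert_of_mem (Finset.mem_image.2 ⟨i ℓ, ?_, G.gHi_eq hiΛ ℓ⟩)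
        exact Finset.mem_Icc.2 ⟨h, h2⟩
      · have h3 : G.hi n cM ℓ ≤ G.lo n i ℓ := G.hi_le_lo hcM hiΛ (hcMℓ ▸ h2)
        have h4 : G.hHi v n j ℓ < G.hi n i ℓ :=
          lt_of_le_of_lt (hcMh ▸ h3) (G.hlh n i hiΛ ℓ)
        exact absurd hcβ (not_le.2 h4)
  have hcard := Finset.card_le_card hsub
  have h5 : (Finset.Icc m M).card = (v ℓ).natAbs + 1 := by
    rw [Int.card_Icc, hM, hm]
    rcases le_total 0 (v ℓ) with h | h
    · rw [max_eq_right (by omega : j ℓ ≤ j ℓ + v ℓ), min_eq_left (by omega : j ℓ ≤ j ℓ + v ℓ)]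
      omega
    · rw [max_eq_left (by omega : j ℓ + v ℓ ≤ j ℓ), min_eq_right (by omega : j ℓ + v ℓ ≤ j ℓ)]
      omega
  calc G.Rp v y n j ℓ ≤ _ := hcard
    _ ≤ ((Finset.Icc m M).image (G.gHi n ℓ)).card + 1 := Finset.card_insert_le _ _
    _ ≤ (Finset.Icc m M).card + 1 := by
        exact Nat.add_le_add_right (Finset.card_image_le) 1
    _ = (v ℓ).natAbs + 2 := by rw [h5]

lemma Rm_le (hj : j ∈ G.Λ n) (hjv : j + v ∈ G.Λ n) {y : Fin d → ℝ}
    (hy : y ∈ G.hull v n j) (ℓ : Fin d) : G.Rm v y n j ℓ ≤ (v ℓ).natAbs + 2 := by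
  classical
  set m := min (j ℓ) (j ℓ + v ℓ) with hm
  set M := max (j ℓ) (j ℓ + v ℓ) with hM
  obtain ⟨cm, hcm, hcmℓ, hcml⟩ := G.exists_min_cell v hj hjv ℓ
  obtain ⟨cM, hcM, hcMℓ, hcMh⟩ := G.exists_max_cell v hj hjv ℓ
  have hsub : ((G.Dlo n ℓ).filter fun c => G.hLo v n j ℓ ≤ c ∧ c ≤ y ℓ)
      ⊆ insert (G.hHi v n j ℓ) ((Finset.Icc m M).image (G.gLo n ℓ)) := by
    intro c hc
    rw [Finset.mem_filter, Dlo, Finset.mem_image] at hc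
    obtain ⟨⟨i, hiΛ, rfl⟩, hαc, hcy⟩ := hc
    rcases lt_or_ge (i ℓ) m with h | h
    · have h1 : G.hi n i ℓ ≤ G.lo n cm ℓ := G.hi_le_lo hiΛ hcm (hcmℓ ▸ h)
      have h2 : G.lo n i ℓ < G.hLo v n j ℓ :=
        lt_of_lt_of_le (G.hlh n i hiΛ ℓ) (hcml ▸ h1)
      exact absurd hαc (not_le.2 h2)
    · rcases le_or_gt (i ℓ) M with h2 | h2
      · refine Finset.mem_insert_of_mem (Finset.mem_image.2 ⟨i ℓ, ?_, G.gLo_eq hiΛ ℓ⟩)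
        exact Finset.mem_Icc.2 ⟨h, h2⟩
      · have h3 : G.hi n cM ℓ ≤ G.lo n i ℓ := G.hi_le_lo hcM hiΛ (hcMℓ ▸ h2)
        have h4 : y ℓ ≤ G.hHi v n j ℓ := ((G.mem_hull_iff v).1 hy ℓ).2
        have : G.lo n i ℓ = G.hHi v n j ℓ :=
          le_antisymm (le_trans hcy (h4.trans (le_refl _))) (hcMh ▸ h3)
        rw [this]
        exact Finset.mem_insert_self _ _
  have hcard := Finset.card_le_card hsub
  have h5 : (Finset.Icc m M).card = (v ℓ).natAbs + 1 := by
    rw [Int.card_Icc, hM, hm]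
    rcases le_total 0 (v ℓ) with h | h
    · rw [max_eq_right (by omega : j ℓ ≤ j ℓ + v ℓ), min_eq_left (by omega : j ℓ ≤ j ℓ + v ℓ)]
      omega
    · rw [max_eq_left (by omega : j ℓ + v ℓ ≤ j ℓ), min_eq_right (by omega : j ℓ + v ℓ ≤ j ℓ)]
      omega
  calc G.Rm v y n j ℓ ≤ _ := hcard
    _ ≤ ((Finset.Icc m M).image (G.gLo n ℓ)).card + 1 := Finset.card_insert_le _ _
    _ ≤ (Finset.Icc m M).card + 1 := Nat.add_le_add_right (Finset.card_image_le) 1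
    _ = (v ℓ).natAbs + 2 := by rw [h5]

lemma Rp_increment {n' : ℕ} (hnn : n ≤ n') {j' : Fin d → ℤ}
    (hj' : j' ∈ G.Λ n') (hj'v : j' + v ∈ G.Λ n') {y p : Fin d → ℝ}
    (hy' : y ∈ G.hull v n' j') (hp : p ∈ G.atomf n' j') {ℓ : Fin d}
    (hpl : G.hHi v n j ℓ < p ℓ) :
    G.Rp v y n j ℓ + 1 ≤ G.Rp v y n' j' ℓ := by
  classical
  set β' := G.hHi v n' j' ℓ with hβ'
  have hpβ' : p ℓ ≤ β' := ((G.mem_hull_iff v).1 (G.atom_sub_hull v hj' hp) ℓ).2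
  have hββ' : G.hHi v n j ℓ < β' := lt_of_lt_of_le hpl hpβ'
  have hβ'D : β' ∈ G.Dhi n' ℓ := by
    obtain ⟨cM, hcM, _, heq⟩ := G.exists_max_cell v hj' hj'v ℓ
    exact Finset.mem_image.2 ⟨cM, hcM, heq⟩
  have hβ'new : β' ∈ (G.Dhi n' ℓ).filter fun c => y ℓ ≤ c ∧ c ≤ G.hHi v n' j' ℓ := by
    rw [Finset.mem_filter]
    exact ⟨hβ'D, ((G.mem_hull_iff v).1 hy' ℓ).2, le_refl _⟩
  have hsub : insert β' ((G.Dhi n ℓ).filter fun c => y ℓ ≤ c ∧ c ≤ G.hHi v n j ℓ)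
      ⊆ (G.Dhi n' ℓ).filter fun c => y ℓ ≤ c ∧ c ≤ G.hHi v n' j' ℓ := by
    intro c hc
    rcases Finset.mem_insert.1 hc with rfl | hc
    · exact hβ'new
    · rw [Finset.mem_filter] at hc
      rw [Finset.mem_filter]
      exact ⟨G.Dhi_mono hnn ℓ hc.1, hc.2.1, le_trans hc.2.2 (le_of_lt hββ')⟩
  have hnm : β' ∉ (G.Dhi n ℓ).filter fun c => y ℓ ≤ c ∧ c ≤ G.hHi v n j ℓ := by
    intro hmem
    rw [Finset.mem_filter] at hmem
    exact absurd hmem.2.2 (not_le.2 hββ')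
  have hfin := Finset.card_le_card hsub
  rw [Finset.card_insert_of_notMem hnm] at hfin
  exact hfin

lemma Rm_increment {n' : ℕ} (hnn : n ≤ n') {j' : Fin d → ℤ}
    (hj' : j' ∈ G.Λ n') (hj'v : j' + v ∈ G.Λ n') {y p : Fin d → ℝ}
    (hy' : y ∈ G.hull v n' j') (hp : p ∈ G.atomf n' j') {ℓ : Fin d}
    (hpl : p ℓ < G.hLo v n j ℓ) :
    G.Rm v y n j ℓ + 1 ≤ G.Rm v y n' j' ℓ := by
  classical
  set α' := G.hLo v n' j' ℓ with hα'
  have hpα' : α' ≤ p ℓ := ((G.mem_hull_iff v).1 (G.atom_sub_hull v hj' hp) ℓ).1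
  have hαα' : α' < G.hLo v n j ℓ := lt_of_le_of_lt hpα' hpl
  have hα'D : α' ∈ G.Dlo n' ℓ := by
    obtain ⟨cm, hcm, _, heq⟩ := G.exists_min_cell v hj' hj'v ℓ
    exact Finset.mem_image.2 ⟨cm, hcm, heq⟩
  have hα'new : α' ∈ (G.Dlo n' ℓ).filter fun c => G.hLo v n' j' ℓ ≤ c ∧ c ≤ y ℓ := by
    rw [Finset.mem_filter]
    exact ⟨hα'D, le_refl _, ((G.mem_hull_iff v).1 hy' ℓ).1⟩
  have hsub : insert α' ((G.Dlo n ℓ).filter fun c => G.hLo v n j ℓ ≤ c ∧ c ≤ y ℓ)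
      ⊆ (G.Dlo n' ℓ).filter fun c => G.hLo v n' j' ℓ ≤ c ∧ c ≤ y ℓ := by
    intro c hc
    rcases Finset.mem_insert.1 hc with rfl | hc
    · exact hα'new
    · rw [Finset.mem_filter] at hc
      rw [Finset.mem_filter]
      exact ⟨G.Dlo_mono hnn ℓ hc.1, le_trans (le_of_lt hαα') hc.2.1, hc.2.2⟩
  have hnm : α' ∉ (G.Dlo n ℓ).filter fun c => G.hLo v n j ℓ ≤ c ∧ c ≤ y ℓ := by
    intro hmem
    rw [Finset.mem_filter] at hmem
    exact absurd hmem.2.1 (not_le.2 hαα')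
  have hfin := Finset.card_le_card hsub
  rw [Finset.card_insert_of_notMem hnm] at hfin
  exact hfin

end GridData

end IMFAux


open IMFAux IMFAux.GridData

set_option maxHeartbeats 1000000 in
/-- the intrinsic maximal function of an interval filtration on `I^d` is of
weak type `(1,1)`: `|{M f > t}| ≤ (C/t) ‖f‖_{L¹}` with `C = C(d,q)`. -/
theorem intrinsic_maximal_weak_type_one_one
    (d : ℕ) (hd : 1 ≤ d) (q : ℝ) (hq0 : 0 ≤ q) (hq1 : q < 1) :
    ∃ C : ℝ≥0∞, C ≠ ∞ ∧
      ∀ (a b : ℝ), a < b →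
      ∀ (Λ : ℕ → Finset (Fin d → ℤ)) (atom : ℕ → (Fin d → ℤ) → Set (Fin d → ℝ))
        (An : ℕ → (Fin d → ℝ) → Fin d → ℤ),
      -- the index sets are boxes of consecutive integers
      (∀ n, ∃ lo hi : Fin d → ℤ,
        Λ n = Fintype.piFinset fun ℓ => Finset.Icc (lo ℓ) (hi ℓ)) →
      -- the atoms are nonempty half-open rectangles
      (∀ n, ∀ i ∈ Λ n, ∃ lo hi : Fin d → ℝ, (∀ ℓ, lo ℓ < hi ℓ) ∧
        atom n i = {x | ∀ ℓ, lo ℓ < x ℓ ∧ x ℓ ≤ hi ℓ}) →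
      -- at each level the atoms form a partition of the cube I^d, I = (a,b]
      (∀ n, ((Λ n : Set (Fin d → ℤ)).PairwiseDisjoint (atom n)) ∧
        (⋃ i ∈ Λ n, atom n i) = Set.univ.pi fun _ : Fin d => Set.Ioc a b) →
      -- the levels form a filtration: each atom is contained in an atom one level down
      (∀ n, ∀ i ∈ Λ (n + 1), ∃ j ∈ Λ n, atom (n + 1) i ⊆ atom n j) →
      -- the atoms are indexed monotonically, coordinate by coordinate
      (∀ n, ∀ i ∈ Λ n, ∀ j ∈ Λ n, ∀ ℓ : Fin d, i ℓ < j ℓ →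
        ∀ x ∈ atom n i, ∀ y ∈ atom n j, x ℓ ≤ y ℓ) →
      -- A_n(x) = atom n (An n x) is the atom of level n containing x
      (∀ n, ∀ x ∈ (Set.univ.pi fun _ : Fin d => Set.Ioc a b),
        An n x ∈ Λ n ∧ x ∈ atom n (An n x)) →
      ∀ f : (Fin d → ℝ) → ℝ,
        Integrable f (volume.restrict (Set.univ.pi fun _ : Fin d => Set.Ioc a b)) →
      ∀ t : ℝ, 0 < t →
      volume {x | x ∈ (Set.univ.pi fun _ : Fin d => Set.Ioc a b) ∧
          ENNReal.ofReal t < intrinsicMaxFn q Λ atom An f x} ≤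
        C / ENNReal.ofReal t *
          ∫⁻ y in (Set.univ.pi fun _ : Fin d => Set.Ioc a b), ‖f y‖₊ := by
  classical
  -- ## constants depending only on d and q
  set r : ℝ := (1 + q) / 2 with hrdef
  have hr0 : 0 < r := by rw [hrdef]; linarith
  have hr1 : r < 1 := by rw [hrdef]; linarith
  have hqr : q < r := by rw [hrdef]; linarith
  set q' : ℝ≥0∞ := ENNReal.ofReal q with hq'def
  set r' : ℝ≥0∞ := ENNReal.ofReal r with hr'def
  set ρ : ℝ≥0∞ := q' * r'⁻¹ with hρdef
  have hρ_ofReal : ρ = ENNReal.ofReal (q / r) := by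
    rw [hρdef, hq'def, hr'def, ENNReal.ofReal_div_of_pos hr0, div_eq_mul_inv,
      ← ENNReal.ofReal_inv_of_pos hr0]
  set SS : (Fin d → ℤ) → ℕ := fun v => ∑ ℓ, (v ℓ).natAbs with hSS
  set NN : (Fin d → ℤ) → ℝ≥0∞ :=
    fun v => ∏ ℓ, (((v ℓ).natAbs + 3 : ℕ) : ℝ≥0∞) ^ 2 with hNN
  set Z : ℝ≥0∞ := ∑' v : Fin d → ℤ, ∏ ℓ, r' ^ (v ℓ).natAbs with hZdef
  have hZ_ne_top : Z ≠ ∞ := by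
    rw [hZdef, tsum_pi_prod (fun k : ℤ => r' ^ k.natAbs)]
    refine ENNReal.pow_ne_top ?_
    refine ne_top_of_le_ne_top ?_ (tsum_int_le (fun m => r' ^ m))
    exact ENNReal.mul_ne_top (by norm_num) (geom_ne_top r hr0.le hr1)
  have hZ_one : 1 ≤ Z := by
    have := ENNReal.le_tsum (f := fun v : Fin d → ℤ => ∏ ℓ, r' ^ (v ℓ).natAbs) 0
    simpa using this
  have hZ_ne_zero : Z ≠ 0 := by
    intro h; rw [h] at hZ_one; exact absurd hZ_one (by norm_num)
  set K : (Fin d → ℤ) → ℝ≥0∞ := fun v => NN v * Z * ρ ^ SS v with hK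
  set C : ℝ≥0∞ := ∑' v : Fin d → ℤ, K v with hC
  have hρ1 : q / r < 1 := (div_lt_one hr0).2 hqr
  have hρ0 : 0 ≤ q / r := div_nonneg hq0 hr0.le
  have hC_ne_top : C ≠ ∞ := by
    rw [hC]
    have hKv : ∀ v : Fin d → ℤ, K v = Z * ∏ ℓ,
        ((((v ℓ).natAbs + 3 : ℕ) : ℝ≥0∞) ^ 2 * ρ ^ (v ℓ).natAbs) := by
      intro v
      rw [hK, hNN, hSS]
      rw [Finset.prod_mul_distrib, Finset.prod_pow_eq_pow_sum]
      ring
    rw [tsum_congr hKv, ENNReal.tsum_mul_left]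
    refine ENNReal.mul_ne_top hZ_ne_top ?_
    rw [tsum_pi_prod (fun k : ℤ => ((k.natAbs + 3 : ℕ) : ℝ≥0∞) ^ 2 * ρ ^ k.natAbs)]
    refine ENNReal.pow_ne_top ?_
    rw [hρ_ofReal]
    refine ne_top_of_le_ne_top ?_
      (tsum_int_le (fun m => ((m + 3 : ℕ) : ℝ≥0∞) ^ 2 * (ENNReal.ofReal (q/r)) ^ m))
    exact ENNReal.mul_ne_top (by norm_num) (poly_geom_ne_top (q/r) hρ0 hρ1)
  refine ⟨C, hC_ne_top, ?_⟩
  intro a b hab Λ atomf An hbox hrect hpart hfilt hmono hAn f hf t ht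
  -- ## grid data construction
  have hrect' : ∀ n i, ∃ lohi : (Fin d → ℝ) × (Fin d → ℝ), i ∈ Λ n →
      ((∀ ℓ, lohi.1 ℓ < lohi.2 ℓ) ∧
        atomf n i = {x | ∀ ℓ, lohi.1 ℓ < x ℓ ∧ x ℓ ≤ lohi.2 ℓ}) := by
    intro n i
    by_cases h : i ∈ Λ n
    · obtain ⟨lo, hi, h1, h2⟩ := hrect n i h
      exact ⟨(lo, hi), fun _ => ⟨h1, h2⟩⟩
    · exact ⟨(0, 1), fun hmem => absurd hmem h⟩
  choose lh hlh' using hrect'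
  set G : GridData d a b :=
    { Λ := Λ, atomf := atomf
      lo := fun n i => (lh n i).1, hi := fun n i => (lh n i).2
      hlh := fun n i h => (hlh' n i h).1
      hatom := fun n i h => (hlh' n i h).2
      hdisj := fun n => (hpart n).1
      hcover := fun n => (hpart n).2
      hfilt := hfilt, hmono := hmono } with hG
  set Q : Set (Fin d → ℝ) := Set.univ.pi fun _ : Fin d => Set.Ioc a b with hQ
  set μc := volume.restrict Q with hμc
  set g : (Fin d → ℝ) → ℝ≥0∞ := fun y => (‖f y‖₊ : ℝ≥0∞) with hgdef
  have hgae : AEMeasurable g μc := hf.aestronglyMeasurable.enorm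
  set Θ : Set (Fin d → ℝ) → ℝ≥0∞ := fun s => ∫⁻ y in s, g y ∂μc with hΘ
  set t' : ℝ≥0∞ := ENNReal.ofReal t with ht'def
  have ht'0 : t' ≠ 0 := by
    rw [ht'def, ne_eq, ENNReal.ofReal_eq_zero]; linarith
  have ht'top : t' ≠ ∞ := by rw [ht'def]; exact ENNReal.ofReal_ne_top
  have hr'0 : r' ≠ 0 := by
    rw [hr'def, ne_eq, ENNReal.ofReal_eq_zero]; push_neg; exact hr0
  have hr'top : r' ≠ ∞ := by rw [hr'def]; exact ENNReal.ofReal_ne_top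
  have hatom_meas : ∀ n, ∀ i ∈ Λ n, MeasurableSet (atomf n i) := by
    intro n i h
    have := G.hatom n i h
    rw [show atomf n i = G.atomf n i from rfl, this]
    have heq : {x : Fin d → ℝ | ∀ ℓ, G.lo n i ℓ < x ℓ ∧ x ℓ ≤ G.hi n i ℓ}
        = Set.univ.pi fun ℓ => Set.Ioc (G.lo n i ℓ) (G.hi n i ℓ) := by
      ext x; simp [Set.mem_pi, Set.mem_Ioc]
    rw [heq]
    exact MeasurableSet.univ_pi fun ℓ => measurableSet_Ioc
  have hΘatom : ∀ n, ∀ i ∈ Λ n, (∫⁻ y in atomf n i, ‖f y‖₊) = Θ (atomf n i) := by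
    intro n i h
    rw [hΘ]
    simp only
    rw [hμc, Measure.restrict_restrict (hatom_meas n i h),
      Set.inter_eq_self_of_subset_left (G.atom_subset_cube h)]
  -- ## the stopping families
  set Pv : (Fin d → ℤ) → ℕ → Finset (Fin d → ℤ) := fun v n =>
    (Λ n).filter (fun j => (j + v) ∈ Λ n ∧
      t' * r' ^ SS v * volume (G.hull v n j) < Z * q' ^ SS v * Θ (G.hull v n j)) with hPvdef
  set Ev : (Fin d → ℤ) → Set (Fin d → ℝ) := fun v => ⋃ n, ⋃ j ∈ Pv v n, atomf n j with hEvdef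
  -- ## COVER
  have cover : {x | x ∈ Q ∧ t' < intrinsicMaxFn q Λ atomf An f x}
      ⊆ ⋃ v : Fin d → ℤ, Ev v := by
    intro x hx
    obtain ⟨hxQ, hxM⟩ := hx
    by_contra hnot
    rw [Set.mem_iUnion] at hnot
    push_neg at hnot
    refine absurd hxM (not_lt.2 ?_)
    rw [intrinsicMaxFn]
    refine iSup_le fun n => iSup_le fun hn => ?_
    obtain ⟨hjΛ, hxj⟩ := hAn n x hxQ
    have hterm : ∀ i ∈ Λ n,
        ENNReal.ofReal q ^ dist1 i (An n x) * (∫⁻ y in atomf n i, ‖f y‖₊) /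
          volume (rectHull (atomf n i ∪ atomf n (An n x)))
        ≤ t' * r' ^ SS (i - An n x) / Z := by
      intro i hi
      set j : Fin d → ℤ := An n x with hjdef
      have hiv : j + (i - j) = i := by ring
      have hjv : j + (i - j) ∈ Λ n := by rw [hiv]; exact hi
      have hnP : j ∉ Pv (i - j) n := by
        intro hmem
        refine hnot (i - j) ?_
        rw [hEvdef]
        exact Set.mem_iUnion.2 ⟨n, Set.mem_biUnion hmem hxj⟩
      have hcond : Z * q' ^ SS (i - j) * Θ (G.hull (i - j) n j)
          ≤ t' * r' ^ SS (i - j) * volume (G.hull (i - j) n j) := by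
        by_contra hlt
        push_neg at hlt
        refine hnP ?_
        rw [hPvdef]
        exact Finset.mem_filter.2 ⟨hjΛ, hjv, hlt⟩
      have hHeq : rectHull (atomf n i ∪ atomf n j) = G.hull (i - j) n j := by
        have h1 : atomf n i = G.atomf n (j + (i - j)) := by rw [hiv]
        rw [h1]
        exact G.rectHull_eq (i - j) hjΛ hjv
      have hd1 : dist1 i j = SS (i - j) := by
        rw [hSS, dist1]
        exact Finset.sum_congr rfl fun ℓ _ => by rw [Pi.sub_apply]
      have hΘa : (∫⁻ y in atomf n i, ‖f y‖₊) = Θ (atomf n i) := hΘatom n i hi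
      have hmono2 : Θ (atomf n i) ≤ Θ (G.hull (i - j) n j) := by
        rw [hΘ]
        refine lintegral_mono_set ?_
        have hsb := G.atom_v_sub_hull (i - j) (n := n) (j := j) hjv
        rw [hiv] at hsb
        exact hsb
      have hkey : ENNReal.ofReal q ^ dist1 i j * Θ (atomf n i)
          ≤ (t' * r' ^ SS (i - j) / Z) * volume (G.hull (i - j) n j) := by
        rw [hd1, ← hq'def]
        calc q' ^ SS (i - j) * Θ (atomf n i)
            ≤ q' ^ SS (i - j) * Θ (G.hull (i - j) n j) := mul_le_mul_right hmono2 _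
          _ ≤ t' * r' ^ SS (i - j) * volume (G.hull (i - j) n j) / Z := by
              rw [ENNReal.le_div_iff_mul_le (Or.inl hZ_ne_zero) (Or.inl hZ_ne_top)]
              calc q' ^ SS (i-j) * Θ (G.hull (i-j) n j) * Z
                  = Z * q' ^ SS (i-j) * Θ (G.hull (i-j) n j) := by ring
                _ ≤ _ := hcond
          _ = (t' * r' ^ SS (i - j) / Z) * volume (G.hull (i - j) n j) := by
              rw [div_eq_mul_inv, div_eq_mul_inv]; ring
      calc ENNReal.ofReal q ^ dist1 i (An n x) * (∫⁻ y in atomf n i, ‖f y‖₊) /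
            volume (rectHull (atomf n i ∪ atomf n (An n x)))
          = ENNReal.ofReal q ^ dist1 i j * Θ (atomf n i) / volume (G.hull (i - j) n j) := by
            rw [← hjdef, hΘa, hHeq]
        _ ≤ t' * r' ^ SS (i - j) / Z := ENNReal.div_le_of_le_mul hkey
    calc (∑ i ∈ Λ n, ENNReal.ofReal q ^ dist1 i (An n x) * (∫⁻ y in atomf n i, ‖f y‖₊) /
            volume (rectHull (atomf n i ∪ atomf n (An n x))))
        ≤ ∑ i ∈ Λ n, t' * r' ^ SS (i - An n x) / Z := Finset.sum_le_sum hterm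
      _ = ∑ w ∈ (Λ n).image (fun i => i - An n x), t' * r' ^ SS w / Z := by
          rw [Finset.sum_image]
          intro x1 hx1 x2 hx2 h12
          exact sub_left_inj.1 h12
      _ ≤ ∑' w : Fin d → ℤ, t' * r' ^ SS w / Z := ENNReal.sum_le_tsum _
      _ = t' / Z * ∑' w : Fin d → ℤ, r' ^ SS w := by
          rw [← ENNReal.tsum_mul_left]
          exact tsum_congr fun w => by rw [div_eq_mul_inv, div_eq_mul_inv]; ring
      _ = t' / Z * Z := by
          congr 1
          rw [hZdef]
          refine tsum_congr fun w => ?_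
          rw [hSS, ← Finset.prod_pow_eq_pow_sum]
      _ ≤ t' := by rw [mul_comm]; exact ENNReal.mul_div_le
  -- ## WEAK type bound for each shift v
  have weak : ∀ v : Fin d → ℤ, volume (Ev v) ≤ K v * Θ Set.univ / t' := by
    intro v
    set A : ℕ → (Fin d → ℤ) → Set (Fin d → ℝ) := fun n j => atomf n j with hA
    set Hl : ℕ → (Fin d → ℤ) → Set (Fin d → ℝ) := fun n j => G.hull v n j with hHl
    set Pl : ℕ → List (Fin d → ℤ) := fun n => (Pv v n).toList with hPl
    have hPmem : ∀ n, ∀ j, j ∈ Pl n → j ∈ Λ n ∧ (j + v) ∈ Λ n ∧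
        t' * r' ^ SS v * volume (G.hull v n j) < Z * q' ^ SS v * Θ (G.hull v n j) := by
      intro n j hj
      rw [hPl] at hj
      have h1 := Finset.mem_toList.1 hj
      rw [hPvdef] at h1
      have h2 := Finset.mem_filter.1 h1
      exact ⟨h2.1, h2.2.1, h2.2.2⟩
    have hAH : ∀ n, ∀ j ∈ Pl n, A n j ⊆ Hl n j := fun n j hj =>
      G.atom_sub_hull v (hPmem n j hj).1
    have hsel : ∀ m k, k ∈ LSel A Hl Pl m → k ∈ Λ m ∧ (k + v) ∈ Λ m ∧
        t' * r' ^ SS v * volume (G.hull v m k) < Z * q' ^ SS v * Θ (G.hull v m k) :=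
      fun m k hk => hPmem m k (LSel_mem hk)
    set Wp : ℕ × (Fin d → ℤ) → Set (Fin d → ℝ) := fun p =>
      if p.2 ∈ LSel A Hl Pl p.1 then Hl p.1 p.2 else ∅ with hWp
    have hWmeas : ∀ p, MeasurableSet (Wp p) := by
      intro p
      rw [hWp]
      dsimp only
      split_ifs
      · exact G.hull_measurable v
      · exact MeasurableSet.empty
    have hEsub : Ev v ⊆ ⋃ p : ℕ × (Fin d → ℤ), Wp p := by
      intro x hx
      rw [hEvdef] at hx
      obtain ⟨n, hn⟩ := Set.mem_iUnion.1 hx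
      obtain ⟨jj, hjj, hxj⟩ := Set.mem_iUnion₂.1 hn
      have hcov := cover_total (A := A) (H := Hl) (P := Pl) hAH n jj
        (Finset.mem_toList.2 hjj) hxj
      obtain ⟨m, hm⟩ := Set.mem_iUnion.1 hcov
      obtain ⟨k, hk, hxk⟩ := Set.mem_iUnion₂.1 hm
      refine Set.mem_iUnion.2 ⟨(m, k), ?_⟩
      rw [hWp]
      dsimp only
      rw [if_pos hk]
      exact hxk
    -- counting bound
    have count : ∀ (y : Fin d → ℝ) (F : Finset (ℕ × (Fin d → ℤ))),
        (∀ p ∈ F, p.2 ∈ LSel A Hl Pl p.1 ∧ y ∈ Hl p.1 p.2) →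
        (F.card : ℝ≥0∞) ≤ NN v := by
      intro y F hF
      have main : ∀ p p' : ℕ × (Fin d → ℤ), p ∈ F → p' ∈ F → p.1 ≤ p'.1 →
          (∃ pt ∈ A p'.1 p'.2, pt ∉ Hl p.1 p.2) →
          (fun ℓ => (G.Rp v y p.1 p.2 ℓ, G.Rm v y p.1 p.2 ℓ)) ≠
          (fun ℓ => (G.Rp v y p'.1 p'.2 ℓ, G.Rm v y p'.1 p'.2 ℓ)) := by
        rintro p p' hp hp' hle ⟨pt, hpt1, hpt2⟩ heq2
        obtain ⟨hsel1', hy1'⟩ := hF p' hp'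
        obtain ⟨hΛ', hΛ'v, _⟩ := hsel p'.1 p'.2 hsel1'
        have hpt2' : pt ∉ G.hull v p.1 p.2 := hpt2
        obtain ⟨ℓ, hℓ⟩ := G.not_mem_hull v hpt2'
        have hy1'' : y ∈ G.hull v p'.1 p'.2 := hy1'
        have hpt1' : pt ∈ G.atomf p'.1 p'.2 := hpt1
        rcases hℓ with hlt | hlt
        · have hinc := G.Rm_increment v hle hΛ' hΛ'v hy1'' hpt1' hlt
          have heqℓ := congrFun heq2 ℓ
          rw [Prod.mk.injEq] at heqℓ
          omega
        · have hinc := G.Rp_increment v hle hΛ' hΛ'v hy1'' hpt1' hlt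
          have heqℓ := congrFun heq2 ℓ
          rw [Prod.mk.injEq] at heqℓ
          omega
      have hinj : Set.InjOn (fun p : ℕ × (Fin d → ℤ) =>
          (fun ℓ => (G.Rp v y p.1 p.2 ℓ, G.Rm v y p.1 p.2 ℓ))) F := by
        intro p hp p' hp' heq
        by_contra hne
        rcases lt_trichotomy p.1 p'.1 with h | h | h
        · refine main p p' hp hp' h.le ?_ heq
          obtain ⟨pt, hpt1, hpt2⟩ := LSel_witness (hF p' hp').1
          exact ⟨pt, hpt1, fun hc => hpt2 (hull_sub_USel h (hF p hp).1 hc)⟩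
        · have hne2 : p.2 ≠ p'.2 := fun hc => hne (Prod.ext h hc)
          have hmem2 : p'.2 ∈ LSel A Hl Pl p.1 := by rw [h]; exact (hF p' hp').1
          rcases pairwise_two (LSel_pairwise (A := A) (H := Hl) (P := Pl) (n := p.1))
              (hF p hp).1 hmem2 hne2 with hw | hw
          · obtain ⟨pt, hpt1, hpt2⟩ := hw
            refine main p p' hp hp' h.le ⟨pt, ?_, hpt2⟩ heq
            rw [← h]
            exact hpt1
          · obtain ⟨pt, hpt1, hpt2⟩ := hw
            refine main p' p hp' hp h.ge ⟨pt, hpt1, ?_⟩ heq.symm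
            rw [← h]
            exact hpt2
        · refine main p' p hp' hp h.le ?_ heq.symm
          obtain ⟨pt, hpt1, hpt2⟩ := LSel_witness (hF p hp).1
          exact ⟨pt, hpt1, fun hc => hpt2 (hull_sub_USel h (hF p' hp').1 hc)⟩
      have hmaps : ∀ p ∈ F, (fun ℓ => (G.Rp v y p.1 p.2 ℓ, G.Rm v y p.1 p.2 ℓ)) ∈
          Fintype.piFinset (fun ℓ => (Finset.range ((v ℓ).natAbs + 3)) ×ˢ
            (Finset.range ((v ℓ).natAbs + 3))) := by
        intro p hp
        rw [Fintype.mem_piFinset]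
        intro ℓ
        rw [Finset.mem_product, Finset.mem_range, Finset.mem_range]
        obtain ⟨hs, hy'⟩ := hF p hp
        obtain ⟨h1, h2, _⟩ := hsel p.1 p.2 hs
        have hy'' : y ∈ G.hull v p.1 p.2 := hy'
        exact ⟨Nat.lt_succ_of_le (G.Rp_le v h1 h2 hy'' ℓ),
          Nat.lt_succ_of_le (G.Rm_le v h1 h2 hy'' ℓ)⟩
      have hcard := Finset.card_le_card_of_injOn _ hmaps hinj
      rw [Fintype.card_piFinset] at hcard
      calc (F.card : ℝ≥0∞)
          ≤ ((∏ ℓ, ((Finset.range ((v ℓ).natAbs + 3)) ×ˢ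
              (Finset.range ((v ℓ).natAbs + 3))).card : ℕ) : ℝ≥0∞) := by
            exact_mod_cast hcard
        _ = NN v := by
            rw [hNN]
            push_cast
            refine Finset.prod_congr rfl fun ℓ _ => ?_
            rw [Finset.card_product, Finset.card_range]
            push_cast
            ring
    -- volume of each selected hull is controlled by its Θ mass
    have hvolW : ∀ p : ℕ × (Fin d → ℤ), volume (Wp p) ≤
        (Z * q' ^ SS v / (t' * r' ^ SS v)) * Θ (Wp p) := by
      intro p
      rw [hWp]
      dsimp only
      split_ifs with hs
      · obtain ⟨h1, h2, h3⟩ := hsel p.1 p.2 hs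
        have h4 : volume (G.hull v p.1 p.2) * (t' * r' ^ SS v)
            ≤ Z * q' ^ SS v * Θ (G.hull v p.1 p.2) := by
          rw [mul_comm]; exact h3.le
        have hne0 : t' * r' ^ SS v ≠ 0 := mul_ne_zero ht'0 (pow_ne_zero _ hr'0)
        have hnetop : t' * r' ^ SS v ≠ ∞ :=
          ENNReal.mul_ne_top ht'top (ENNReal.pow_ne_top hr'top)
        have h5 := (ENNReal.le_div_iff_mul_le (Or.inl hne0) (Or.inl hnetop)).2 h4
        calc volume (G.hull v p.1 p.2)
            ≤ Z * q' ^ SS v * Θ (G.hull v p.1 p.2) / (t' * r' ^ SS v) := h5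
          _ = (Z * q' ^ SS v / (t' * r' ^ SS v)) * Θ (G.hull v p.1 p.2) := by
              rw [div_eq_mul_inv, div_eq_mul_inv]; ring
      · simp [hΘ]
    -- overlap bound for the Θ masses
    have hNNtop : NN v ≠ ∞ := by
      rw [hNN]
      exact (ENNReal.prod_lt_top fun ℓ _ =>
        (ENNReal.pow_lt_top (ENNReal.natCast_lt_top _))).ne
    have hΘWsum : ∑' p : ℕ × (Fin d → ℤ), Θ (Wp p) ≤ NN v * Θ Set.univ := by
      have hΘW : ∀ p, Θ (Wp p) = ∫⁻ yy, (Wp p).indicator g yy ∂μc := by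
        intro p
        rw [hΘ]
        simp only
        rw [lintegral_indicator (hWmeas p)]
      rw [tsum_congr hΘW, ← lintegral_tsum (fun p => (hgae.indicator (hWmeas p)))]
      have hΘuniv : Θ Set.univ = ∫⁻ yy, g yy ∂μc := by
        rw [hΘ]; simp only; rw [setLIntegral_univ]
      rw [hΘuniv]
      calc ∫⁻ yy, (∑' p, (Wp p).indicator g yy) ∂μc
          ≤ ∫⁻ yy, NN v * g yy ∂μc := by
            refine lintegral_mono fun yy => ?_
            rw [ENNReal.tsum_eq_iSup_sum]
            refine iSup_le fun F => ?_
            have heval : (∑ p ∈ F, (Wp p).indicator g yy) =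
                ((F.filter (fun p => yy ∈ Wp p)).card : ℝ≥0∞) * g yy := by
              rw [← nsmul_eq_mul, ← Finset.sum_const, Finset.sum_filter]
              refine Finset.sum_congr rfl fun p _ => ?_
              rw [Set.indicator_apply]
            rw [heval]
            refine mul_le_mul_left ?_ (g yy)
            refine count yy (F.filter (fun p => yy ∈ Wp p)) ?_
            intro p hp
            have hp2 := (Finset.mem_filter.1 hp).2
            rw [hWp] at hp2
            dsimp only at hp2
            by_cases hs : p.2 ∈ LSel A Hl Pl p.1
            · rw [if_pos hs] at hp2; exact ⟨hs, hp2⟩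
            · rw [if_neg hs] at hp2; exact absurd hp2 (Set.notMem_empty yy)
        _ = NN v * ∫⁻ yy, g yy ∂μc := lintegral_const_mul' _ _ hNNtop
    -- put the pieces together
    have hfinal : volume (Ev v) ≤ (Z * q' ^ SS v / (t' * r' ^ SS v)) * (NN v * Θ Set.univ) := by
      calc volume (Ev v) ≤ volume (⋃ p : ℕ × (Fin d → ℤ), Wp p) := measure_mono hEsub
        _ ≤ ∑' p : ℕ × (Fin d → ℤ), volume (Wp p) := measure_iUnion_le _
        _ ≤ ∑' p : ℕ × (Fin d → ℤ), (Z * q' ^ SS v / (t' * r' ^ SS v)) * Θ (Wp p) :=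
            ENNReal.tsum_le_tsum hvolW
        _ = (Z * q' ^ SS v / (t' * r' ^ SS v)) * ∑' p : ℕ × (Fin d → ℤ), Θ (Wp p) :=
            ENNReal.tsum_mul_left
        _ ≤ _ := mul_le_mul_right hΘWsum _
    refine hfinal.trans (le_of_eq ?_)
    have hpow : ρ ^ SS v = q' ^ SS v * (r' ^ SS v)⁻¹ := by
      rw [hρdef, mul_pow, ENNReal.inv_pow]
    have hinv : (t' * r' ^ SS v)⁻¹ = t'⁻¹ * (r' ^ SS v)⁻¹ :=
      ENNReal.mul_inv (Or.inl ht'0) (Or.inl ht'top)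
    simp only [hK]
    rw [div_eq_mul_inv, div_eq_mul_inv, hinv, hpow]
    ring
  -- ## final assembly
  have hΘuniv2 : Θ Set.univ = ∫⁻ y, g y ∂μc := by
    show (∫⁻ y in Set.univ, g y ∂μc) = _
    exact setLIntegral_univ g
  calc volume {x | x ∈ Q ∧ t' < intrinsicMaxFn q Λ atomf An f x}
      ≤ volume (⋃ v : Fin d → ℤ, Ev v) := measure_mono cover
    _ ≤ ∑' v : Fin d → ℤ, volume (Ev v) := measure_iUnion_le _
    _ ≤ ∑' v : Fin d → ℤ, K v * Θ Set.univ / t' := ENNReal.tsum_le_tsum weak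
    _ = C / t' * Θ Set.univ := by
        rw [hC, div_eq_mul_inv, ← ENNReal.tsum_mul_right, ← ENNReal.tsum_mul_right]
        refine tsum_congr fun v => ?_
        rw [div_eq_mul_inv]
        ring
    _ = C / t' * ∫⁻ y, g y ∂μc := by rw [hΘuniv2]
end
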